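/- arXiv:2108.04054 — 6 statements merged into one kernel-verified Lean document; each statement's English description precedes it below -/
import Mathlib

section
/- Fix a constraint value C ∈ (0, 1/2) and restrict the bounded measurable game to strategies supported in [0, 1]. A strategy f with mca(f) ≤ C satisfies wp(f; g) ≥ 0 for every strategy g supported in [0, 1] with mca(g) ≤ C if and only if there exists a constant a > 0 such that f is almost everywhere equal to a on [0, 2C] and almost everywhere equal to 0 on (2C, 1]. -/
/-!
By Fubini, `wp f g = ∫ g(t) P(t) dt`, where `P(t) = W - 2 F(t)` (`pointPayoff`),
`F(t) = ∫₀ᵗ f` (`cumMass`) and `W = ∫ f` (`totalMass`); in particular `wp f f = 0`.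

If `f = a` on `[0, 2C]` and `f = 0` after, then `P(t) ≥ 2a (C - t)`, so
`wp f g ≥ 2a (C ∫ g - ∫ t g(t) dt) ≥ 0` as soon as `mca g ≤ C`.

Conversely, playing against strategies made of two narrow blocks at `x < C < y` with mean
below `C` and letting the blocks shrink gives `(y - C) P(x) + (C - x) P(y) ≥ 0`. This produces a
Lagrange multiplier `l > 0` with `P(t) ≥ l (C - t)` on `[0, 1]`. Integrating against `f` itself,
`0 = wp f f ≥ l (C W - ∫ t f(t) dt) ≥ 0`, so `f` lives on the contact set `{P(t) = l (C - t)}`.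
On a gap of the contact set `P` is constant while `l (C - t)` decreases, so the contact set is an
interval `[0, β]`; evaluating there gives `W = l C` and `β = 2C`. Hence `F(t) = l t / 2` on
`[0, 2C]`, and by Lebesgue differentiation `f = l / 2` there.
-/

open MeasureTheory Set

/-- Mean competitive ability of a function supported in `[0, ∞)`:
`mca f = (∫₀^∞ t f(t) dt) / (∫₀^∞ f(t) dt)`. -/
noncomputable def mca (f : ℝ → ℝ) : ℝ :=
  (∫ t in Ioi (0:ℝ), t * f t) / (∫ t in Ioi (0:ℝ), f t)

/-- Payoff of `f` against `g`:
`wp f g = ∫₀^∞ f(x) (∫₀ˣ g(t) dt − ∫ₓ^∞ g(t) dt) dx`. -/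
noncomputable def wp (f g : ℝ → ℝ) : ℝ :=
  ∫ x in Ioi (0:ℝ), f x * ((∫ t in Ioc (0:ℝ) x, g t) - ∫ t in Ioi x, g t)

/-- A bounded measurable strategy: measurable, bounded, nonnegative, compactly
supported in `[0, ∞)`, and not almost everywhere zero. -/
def IsStrategy (f : ℝ → ℝ) : Prop :=
  Measurable f ∧ (∃ Cb : ℝ, ∀ x, f x ≤ Cb) ∧ (∀ x, 0 ≤ f x) ∧
  (∃ R : ℝ, Function.support f ⊆ Icc 0 R) ∧ ¬ f =ᵐ[volume] (0 : ℝ → ℝ)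

open Filter Topology

noncomputable def cumMass (f : ℝ → ℝ) (t : ℝ) : ℝ := ∫ s in Ioc 0 t, f s

noncomputable def totalMass (f : ℝ → ℝ) : ℝ := ∫ s in Ioi 0, f s

/-- `W - 2 F(t)` is the payoff `wp f δₜ` of `f` against the point mass at `t`. -/
noncomputable def pointPayoff (f : ℝ → ℝ) (t : ℝ) : ℝ := totalMass f - 2 * cumMass f t

section Integrable

variable {f g : ℝ → ℝ}

lemma cumMass_zero (f : ℝ → ℝ) : cumMass f 0 = 0 := by
  simp [cumMass]

lemma cumMass_eq_intervalIntegral_indicator (f : ℝ → ℝ) (t : ℝ) :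
    cumMass f t = ∫ s in 0..t, (Ioi 0).indicator f s := by
  rcases le_total 0 t with ht | ht
  · rw [intervalIntegral.integral_of_le ht, cumMass, integral_indicator measurableSet_Ioi,
      Measure.restrict_restrict measurableSet_Ioi, inter_eq_right.2 Ioc_subset_Ioi_self]
  · rw [intervalIntegral.integral_of_ge ht, cumMass, integral_indicator measurableSet_Ioi,
      Measure.restrict_restrict measurableSet_Ioi, Ioc_eq_empty (not_lt.2 ht),
      inter_comm, Ioc_inter_Ioi, sup_of_le_right ht]
    simp

lemma continuous_cumMass (hf : Integrable f) : Continuous (cumMass f) := by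
  simp_rw [funext (cumMass_eq_intervalIntegral_indicator f)]
  exact intervalIntegral.continuous_primitive
    (fun _ _ => (hf.indicator measurableSet_Ioi).intervalIntegrable) 0

lemma continuous_pointPayoff (hf : Integrable f) : Continuous (pointPayoff f) :=
  continuous_const.sub (continuous_const.mul (continuous_cumMass hf))

lemma abs_cumMass_le (hf : Integrable f) (t : ℝ) : |cumMass f t| ≤ ∫ s, |f s| :=
  (abs_integral_le_integral_abs).trans
    (setIntegral_le_integral hf.abs (ae_of_all _ fun _ => abs_nonneg _))

lemma integrable_mul_cumMass (hf : Integrable f) (hg : Integrable g) :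
    Integrable (fun x => f x * cumMass g x) :=
  hf.mul_bdd (continuous_cumMass hg).aestronglyMeasurable
    (ae_of_all _ fun x => abs_cumMass_le hg x)

lemma totalMass_eq_cumMass_add (hf : Integrable f) {t : ℝ} (ht : 0 ≤ t) :
    totalMass f = cumMass f t + ∫ s in Ioi t, f s := by
  rw [totalMass, cumMass, ← setIntegral_union Ioc_disjoint_Ioi_same measurableSet_Ioi
    hf.integrableOn hf.integrableOn, Ioc_union_Ioi_eq_Ioi ht]

lemma cumMass_eq_of_ae_eq_zero (hf : Integrable f) {a b : ℝ} (ha : 0 ≤ a)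
    (hab : a ≤ b) (hzero : ∀ᵐ t ∂(volume.restrict (Ioc a b)), f t = 0) :
    cumMass f b = cumMass f a := by
  rw [cumMass, cumMass, ← Ioc_union_Ioc_eq_Ioc ha hab,
    setIntegral_union (Ioc_disjoint_Ioc_of_le le_rfl) measurableSet_Ioc hf.integrableOn
      hf.integrableOn, integral_eq_zero_of_ae hzero, add_zero]

lemma cumMass_eq_totalMass (hf : Integrable f) {t : ℝ} (ht : 0 ≤ t)
    (hsupp : Function.support f ⊆ Iic t) : cumMass f t = totalMass f := by
  rw [totalMass_eq_cumMass_add hf ht, setIntegral_eq_zero_of_forall_eq_zero fun x hx =>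
    Function.notMem_support.1 fun h => (mem_Iic.1 (hsupp h)).not_gt (mem_Ioi.1 hx), add_zero]

lemma integral_mul_cumMass_add_integral_mul_cumMass (hf : Integrable f) (hg : Integrable g) :
    (∫ x in Ioi 0, f x * cumMass g x) + ∫ t in Ioi 0, g t * cumMass f t
      = totalMass f * totalMass g := by
  set μ := volume.restrict (Ioi (0 : ℝ))
  set Φ : ℝ × ℝ → ℝ := fun z => f z.1 * g z.2
  have hΦ : Integrable Φ (μ.prod μ) := hf.restrict.mul_prod hg.restrict
  set D := {z : ℝ × ℝ | z.2 ≤ z.1}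
  have hD : MeasurableSet D := measurableSet_le measurable_snd measurable_fst
  have below : ∫ z in D, Φ z ∂(μ.prod μ) = ∫ x in Ioi 0, f x * cumMass g x := by
    rw [← integral_indicator hD, integral_prod _ (hΦ.indicator hD)]
    refine integral_congr_ae (ae_of_all _ fun x => ?_)
    have hx : (fun t => D.indicator Φ (x, t)) = fun t => f x * (Iic x).indicator g t := by
      ext t; by_cases ht : t ≤ x <;> simp [D, Φ, ht]
    simp only [hx, integral_const_mul, integral_indicator measurableSet_Iic, μ,
      Measure.restrict_restrict measurableSet_Iic, Iic_inter_Ioi, cumMass]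
  have above : ∫ z in Dᶜ, Φ z ∂(μ.prod μ) = ∫ t in Ioi 0, g t * cumMass f t := by
    rw [← integral_indicator hD.compl, integral_prod_symm _ (hΦ.indicator hD.compl)]
    refine integral_congr_ae (ae_of_all _ fun t => ?_)
    have ht : (fun x => Dᶜ.indicator Φ (x, t)) = fun x => g t * (Iio t).indicator f x := by
      ext x; by_cases hx : x < t <;> simp [D, Φ, hx, mul_comm]
    simp only [ht, integral_const_mul, integral_indicator measurableSet_Iio, μ,
      Measure.restrict_restrict measurableSet_Iio, Iio_inter_Ioi, cumMass,
      integral_Ioc_eq_integral_Ioo]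
  rw [← below, ← above, integral_add_compl hD hΦ]
  exact integral_prod_mul f g

lemma wp_eq_two_mul_sub (hf : Integrable f) (hg : Integrable g) :
    wp f g = 2 * (∫ x in Ioi 0, f x * cumMass g x) - totalMass g * totalMass f := by
  have hpt : ∀ x ∈ Ioi (0 : ℝ), f x * ((∫ t in Ioc 0 x, g t) - ∫ t in Ioi x, g t)
      = 2 * (f x * cumMass g x) - totalMass g * f x := fun x hx => by
    rw [totalMass_eq_cumMass_add hg (le_of_lt hx), cumMass]; ring
  rw [wp, setIntegral_congr_fun measurableSet_Ioi hpt,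
    integral_sub ((integrable_mul_cumMass hf hg).restrict.const_mul 2)
      (hf.restrict.const_mul _), integral_const_mul, integral_const_mul]
  rfl

lemma wp_eq_integral_mul_pointPayoff (hf : Integrable f) (hg : Integrable g) :
    wp f g = ∫ t in Ioi 0, g t * pointPayoff f t := by
  have hpt : ∀ t, g t * pointPayoff f t = totalMass f * g t - 2 * (g t * cumMass f t) :=
    fun t => by rw [pointPayoff]; ring
  simp_rw [hpt]
  rw [integral_sub (hg.restrict.const_mul _)
      ((integrable_mul_cumMass hg hf).restrict.const_mul 2), integral_const_mul,
    integral_const_mul, wp_eq_two_mul_sub hf hg]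
  change _ = totalMass f * totalMass g - _
  linarith [integral_mul_cumMass_add_integral_mul_cumMass hf hg]

lemma wp_self (hf : Integrable f) : wp f f = 0 := by
  rw [wp_eq_two_mul_sub hf hf]
  linarith [integral_mul_cumMass_add_integral_mul_cumMass hf hf]

lemma integrable_mul_pointPayoff (hf : Integrable f) (hg : Integrable g) :
    Integrable (fun t => g t * pointPayoff f t) :=
  ((hg.const_mul (totalMass f)).sub ((integrable_mul_cumMass hg hf).const_mul 2)).congr
    (ae_of_all _ fun t => by simp only [pointPayoff, Pi.sub_apply]; ring)

end Integrable

namespace IsStrategy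

variable {f : ℝ → ℝ}

lemma integrableOn_Icc (hf : IsStrategy f) (a b : ℝ) : IntegrableOn f (Icc a b) := by
  obtain ⟨hm, ⟨M, hM⟩, hnn, -⟩ := hf
  refine .of_bound measure_Icc_lt_top hm.aestronglyMeasurable M (ae_of_all _ fun x => ?_)
  rw [Real.norm_of_nonneg (hnn x)]
  exact hM x

lemma integrable (hf : IsStrategy f) : Integrable f := by
  obtain ⟨R, hR⟩ := hf.2.2.2.1
  exact (integrableOn_iff_integrable_of_support_subset hR).1 (hf.integrableOn_Icc 0 R)

lemma integrable_id_mul (hf : IsStrategy f) : Integrable (fun t => t * f t) := by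
  obtain ⟨R, hR⟩ := hf.2.2.2.1
  exact (integrableOn_iff_integrable_of_support_subset
    ((Function.support_mul_subset_right _ _).trans hR)).1
    ((hf.integrableOn_Icc 0 R).continuousOn_mul continuousOn_id isCompact_Icc)

lemma totalMass_eq_integral (hf : IsStrategy f) : totalMass f = ∫ t, f t := by
  obtain ⟨R, hR⟩ := hf.2.2.2.1
  rw [totalMass, ← integral_Ici_eq_integral_Ioi]
  exact setIntegral_eq_integral_of_forall_compl_eq_zero fun x hx =>
    Function.notMem_support.1 fun h => hx (hR h).1

lemma totalMass_pos (hf : IsStrategy f) : 0 < totalMass f := by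
  rw [hf.totalMass_eq_integral, integral_pos_iff_support_of_nonneg hf.2.2.1 hf.integrable,
    pos_iff_ne_zero]
  exact hf.2.2.2.2

lemma mca_le_iff (hf : IsStrategy f) {C : ℝ} :
    mca f ≤ C ↔ ∫ t in Ioi 0, t * f t ≤ C * totalMass f :=
  div_le_iff₀ hf.totalMass_pos

end IsStrategy

lemma integrable_mul_pointPayoff_sub {f g : ℝ → ℝ} (hf : Integrable f) (hg : IsStrategy g)
    (l C : ℝ) : Integrable (fun t => g t * (pointPayoff f t - l * (C - t))) :=
  ((integrable_mul_pointPayoff hf hg.integrable).sub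
    (((hg.integrable.const_mul C).sub hg.integrable_id_mul).const_mul l)).congr
    (ae_of_all _ fun t => by simp only [Pi.sub_apply]; ring)

lemma integral_mul_pointPayoff_sub {f g : ℝ → ℝ} (hf : Integrable f) (hg : IsStrategy g)
    (l C : ℝ) :
    ∫ t in Ioi 0, g t * (pointPayoff f t - l * (C - t))
      = wp f g - l * (C * totalMass g - ∫ t in Ioi 0, t * g t) := by
  have hpt : ∀ t, g t * (pointPayoff f t - l * (C - t))
      = g t * pointPayoff f t - l * (C * g t - t * g t) := fun t => by ring
  have hgC : Integrable (fun t => C * g t - t * g t) :=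
    (hg.integrable.const_mul C).sub hg.integrable_id_mul
  simp_rw [hpt]
  rw [integral_sub (integrable_mul_pointPayoff hf hg.integrable).restrict
      (hgC.restrict.const_mul l),
    integral_const_mul, integral_sub (hg.integrable.const_mul C).restrict
      hg.integrable_id_mul.restrict, integral_const_mul,
    wp_eq_integral_mul_pointPayoff hf hg.integrable]
  rfl

lemma wp_nonneg_of_mul_sub_le_pointPayoff {f g : ℝ → ℝ} (hf : Integrable f) (hg : IsStrategy g)
    {l C : ℝ} (hl : 0 ≤ l) (hfC : ∀ t > 0, l * (C - t) ≤ pointPayoff f t)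
    (hgC : mca g ≤ C) : 0 ≤ wp f g := by
  have hint : 0 ≤ ∫ t in Ioi 0, g t * (pointPayoff f t - l * (C - t)) :=
    setIntegral_nonneg measurableSet_Ioi fun t ht =>
      mul_nonneg (hg.2.2.1 t) (sub_nonneg.2 (hfC t ht))
  rw [integral_mul_pointPayoff_sub hf hg] at hint
  nlinarith [hg.mca_le_iff.1 hgC]

lemma mul_sub_le_pointPayoff_of_ae_eq {f : ℝ → ℝ} {C a : ℝ} (hC : 0 ≤ C) (ha : 0 ≤ a)
    (hf : IsStrategy f) (hsupp : Function.support f ⊆ Icc 0 1)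
    (h_on : ∀ᵐ x ∂(volume.restrict (Icc 0 (2 * C))), f x = a)
    (h_off : ∀ᵐ x ∂(volume.restrict (Ioc (2 * C) 1)), f x = 0) (t : ℝ) (ht : 0 ≤ t) :
    2 * a * (C - t) ≤ pointPayoff f t := by
  have h_beyond : ∀ᵐ x ∂(volume.restrict (Ioi (2 * C))), f x = 0 := by
    have h_one : ∀ᵐ x ∂(volume.restrict (Ioi 1)), f x = 0 :=
      ae_restrict_of_forall_mem measurableSet_Ioi fun x hx =>
        Function.notMem_support.1 fun h => (hsupp h).2.not_gt hx
    refine ae_restrict_of_ae_restrict_of_subset (fun x hx => ?_)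
      ((ae_restrict_union_iff _ _ _).2 ⟨h_off, h_one⟩)
    exact (le_or_gt x 1).imp (fun h => ⟨hx, h⟩) id
  have h_le : ∀ᵐ x ∂(volume.restrict (Ioi 0)), f x ≤ a := by
    refine ae_restrict_of_ae_restrict_of_subset (fun x hx => ?_)
      ((ae_restrict_union_iff _ _ _).2 ⟨h_on.mono fun x hx => hx.le,
        h_beyond.mono fun x hx => hx.trans_le ha⟩)
    exact (le_or_gt x (2 * C)).imp (fun h => ⟨le_of_lt hx, h⟩) id
  have hW : totalMass f = 2 * a * C := by
    rw [totalMass_eq_cumMass_add hf.integrable (t := 2 * C) (by linarith),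
      integral_eq_zero_of_ae h_beyond, cumMass, setIntegral_congr_ae measurableSet_Ioc
        ((ae_restrict_iff' measurableSet_Ioc).1 (ae_restrict_of_ae_restrict_of_subset
          Ioc_subset_Icc_self h_on)),
      setIntegral_const, Real.volume_real_Ioc_of_le (by linarith), smul_eq_mul]
    ring
  have hF : cumMass f t ≤ a * t := by
    calc cumMass f t ≤ ∫ _ in Ioc 0 t, a :=
          setIntegral_mono_ae_restrict hf.integrable.integrableOn
            (integrableOn_const measure_Ioc_lt_top.ne)
            (ae_restrict_of_ae_restrict_of_subset Ioc_subset_Ioi_self h_le)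
      _ = a * t := by
          rw [setIntegral_const, Real.volume_real_Ioc_of_le ht, smul_eq_mul]; ring
  rw [pointPayoff, hW]
  linarith

lemma tendsto_setIntegral_Ioc_div {φ : ℝ → ℝ} (hφ : Continuous φ) (x : ℝ) :
    Tendsto (fun ε => (∫ t in Ioc x (x + ε), φ t) / ε) (𝓝[>] 0) (𝓝 (φ x)) := by
  have hd : HasDerivAt (fun u => ∫ t in x..u, φ t) (φ x) x :=
    intervalIntegral.integral_hasDerivAt_right (hφ.intervalIntegrable _ _)
      hφ.aestronglyMeasurable.stronglyMeasurableAtFilter hφ.continuousAt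
  refine hd.tendsto_slope_zero_right.congr' ?_
  filter_upwards [self_mem_nhdsWithin] with ε (hε : 0 < ε)
  rw [intervalIntegral.integral_same, sub_zero, intervalIntegral.integral_of_le (by linarith),
    smul_eq_mul, div_eq_inv_mul]

lemma setIntegral_Ioi_indicator_mul {z w : ℝ} (hz : 0 ≤ z) (c : ℝ) (φ : ℝ → ℝ) :
    ∫ t in Ioi 0, (Ioc z w).indicator (fun _ => c) t * φ t = c * ∫ t in Ioc z w, φ t := by
  simp_rw [← indicator_mul_left]
  rw [integral_indicator measurableSet_Ioc, Measure.restrict_restrict measurableSet_Ioc,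
    inter_eq_left.2 (Ioc_subset_Ioi_self.trans (Ioi_subset_Ioi hz)), integral_const_mul]

lemma setIntegral_Ioc_id (x ε : ℝ) (hε : 0 ≤ ε) :
    ∫ t in Ioc x (x + ε), t = ε * x + ε ^ 2 / 2 := by
  rw [← intervalIntegral.integral_of_le (by linarith), integral_id]
  ring

noncomputable def twoBlock (p x q y ε : ℝ) (t : ℝ) : ℝ :=
  (Ioc x (x + ε)).indicator (fun _ => p) t + (Ioc y (y + ε)).indicator (fun _ => q) t

section TwoBlock

variable {p x q y ε : ℝ}

lemma integral_twoBlock_mul (hx : 0 ≤ x) (hy : 0 ≤ y) {φ : ℝ → ℝ} (hφ : Continuous φ) :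
    ∫ t in Ioi 0, twoBlock p x q y ε t * φ t
      = p * (∫ t in Ioc x (x + ε), φ t) + q * ∫ t in Ioc y (y + ε), φ t := by
  have hint : ∀ z c : ℝ, Integrable (fun t => (Ioc z (z + ε)).indicator (fun _ => c) t * φ t) :=
    fun z c => by
      simp_rw [← indicator_mul_left]
      exact (integrable_indicator_iff measurableSet_Ioc).2 (hφ.integrableOn_Ioc.const_mul c)
  simp_rw [twoBlock, add_mul]
  rw [integral_add (hint x p).restrict (hint y q).restrict, setIntegral_Ioi_indicator_mul hx,
    setIntegral_Ioi_indicator_mul hy]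

lemma support_twoBlock_subset (hx : 0 ≤ x) (hy : 0 ≤ y) (hxε : x + ε ≤ 1) (hyε : y + ε ≤ 1) :
    Function.support (twoBlock p x q y ε) ⊆ Icc 0 1 :=
  (Function.support_add _ _).trans <| union_subset
    (support_indicator_subset.trans (Ioc_subset_Icc_self.trans (Icc_subset_Icc hx hxε)))
    (support_indicator_subset.trans (Ioc_subset_Icc_self.trans (Icc_subset_Icc hy hyε)))

lemma isStrategy_twoBlock (hx : 0 ≤ x) (hy : 0 ≤ y) (hxε : x + ε ≤ 1) (hyε : y + ε ≤ 1)
    (hp : 0 ≤ p) (hq : 0 < q) (hε : 0 < ε) : IsStrategy (twoBlock p x q y ε) := by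
  have hpos : ∀ t ∈ Ioc y (y + ε), q ≤ twoBlock p x q y ε t := fun t ht => by
    simp only [twoBlock, indicator_of_mem ht]
    linarith [indicator_nonneg (fun _ _ => hp) t (s := Ioc x (x + ε))]
  refine ⟨(measurable_const.indicator measurableSet_Ioc).add
      (measurable_const.indicator measurableSet_Ioc), ⟨p + q, fun t => ?_⟩,
    fun t => add_nonneg (indicator_nonneg (fun _ _ => hp) t)
      (indicator_nonneg (fun _ _ => hq.le) t),
    ⟨1, support_twoBlock_subset hx hy hxε hyε⟩, fun h => ?_⟩
  · exact add_le_add (indicator_le_self' (fun _ _ => hp) t)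
      (indicator_le_self' (fun _ _ => hq.le) t)
  · have hnull : volume (Ioc y (y + ε)) = 0 :=
      measure_mono_null (fun t ht => (hq.trans_le (hpos t ht)).ne') (ae_iff.1 h)
    simp only [Real.volume_Ioc, add_sub_cancel_left, ENNReal.ofReal_eq_zero] at hnull
    linarith

end TwoBlock

def IsUnbeatable (C : ℝ) (f : ℝ → ℝ) : Prop :=
  ∀ g : ℝ → ℝ, IsStrategy g → Function.support g ⊆ Icc (0:ℝ) 1 → mca g ≤ C → 0 ≤ wp f g

namespace IsUnbeatable

variable {C : ℝ} {f : ℝ → ℝ}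

lemma twoBlock_nonneg (hwin : IsUnbeatable C f) (hf : Integrable f) {p x q y ε : ℝ}
    (hx : 0 ≤ x) (hy : 0 ≤ y) (hxε : x + ε ≤ 1) (hyε : y + ε ≤ 1) (hp : 0 ≤ p) (hq : 0 < q)
    (hε : 0 < ε) (hmoment : p * x + q * y + (p + q) * ε / 2 ≤ C * (p + q)) :
    0 ≤ p * (∫ t in Ioc x (x + ε), pointPayoff f t)
      + q * ∫ t in Ioc y (y + ε), pointPayoff f t := by
  have hg := isStrategy_twoBlock hx hy hxε hyε hp hq hε
  have hmass : totalMass (twoBlock p x q y ε) = (p + q) * ε := by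
    have := integral_twoBlock_mul (p := p) (q := q) (ε := ε) hx hy
      (continuous_const (y := (1 : ℝ)))
    simp only [mul_one, setIntegral_const, smul_eq_mul,
      Real.volume_real_Ioc_of_le (le_add_of_nonneg_right hε.le), add_sub_cancel_left] at this
    rw [totalMass, this]
    ring
  have hfirst : ∫ t in Ioi 0, t * twoBlock p x q y ε t
      = p * (ε * x + ε ^ 2 / 2) + q * (ε * y + ε ^ 2 / 2) := by
    simp_rw [mul_comm _ (twoBlock p x q y ε _)]
    rw [integral_twoBlock_mul hx hy (φ := fun t => t) continuous_id,
      setIntegral_Ioc_id x ε hε.le, setIntegral_Ioc_id y ε hε.le]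
  have hmca : mca (twoBlock p x q y ε) ≤ C := by
    rw [hg.mca_le_iff, hfirst, hmass]
    nlinarith
  have := hwin _ hg (support_twoBlock_subset hx hy hxε hyε) hmca
  rwa [wp_eq_integral_mul_pointPayoff hf hg.integrable,
    integral_twoBlock_mul hx hy (continuous_pointPayoff hf)] at this

lemma two_point_nonneg (hwin : IsUnbeatable C f) (hf : Integrable f) {p x q y : ℝ}
    (hx : x ∈ Ico 0 1) (hy : y ∈ Ico 0 1) (hp : 0 ≤ p) (hq : 0 < q)
    (hmoment : p * x + q * y < C * (p + q)) :
    0 ≤ p * pointPayoff f x + q * pointPayoff f y := by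
  have hP := continuous_pointPayoff hf
  have hlim := ((tendsto_setIntegral_Ioc_div hP x).const_mul p).add
    ((tendsto_setIntegral_Ioc_div hP y).const_mul q)
  have hsmall : ∀ c > 0, ∀ᶠ ε in 𝓝[>] (0 : ℝ), ε < c := fun c hc =>
    eventually_nhdsWithin_of_eventually_nhds (eventually_lt_nhds hc)
  have hpq : 0 < p + q := by linarith
  refine ge_of_tendsto hlim ?_
  filter_upwards [self_mem_nhdsWithin, hsmall (1 - x) (by linarith [hx.2]),
    hsmall (1 - y) (by linarith [hy.2]),
    hsmall (2 * (C * (p + q) - (p * x + q * y)) / (p + q)) (by apply div_pos <;> linarith)]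
    with ε (hε : 0 < ε) hxε hyε hεC
  rw [lt_div_iff₀ hpq] at hεC
  have := hwin.twoBlock_nonneg hf hx.1 hy.1 (by linarith) (by linarith) hp hq hε (by linarith)
  rw [mul_div_assoc', mul_div_assoc', ← add_div]
  exact div_nonneg this hε.le

lemma cross_nonneg (hwin : IsUnbeatable C f) (hf : Integrable f) {x y : ℝ} (hx : x ∈ Ico 0 C)
    (hy : y ∈ Ioo C 1) : 0 ≤ (y - C) * pointPayoff f x + (C - x) * pointPayoff f y := by
  have hlim : Tendsto (fun q => (y - C) * pointPayoff f x + q * pointPayoff f y)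
      (𝓝[<] (C - x)) (𝓝 ((y - C) * pointPayoff f x + (C - x) * pointPayoff f y)) :=
    ((continuous_const.add (continuous_id.mul continuous_const)).tendsto _).mono_left
      nhdsWithin_le_nhds
  refine ge_of_tendsto hlim ?_
  filter_upwards [Ioo_mem_nhdsLT (by linarith [hx.2] : 0 < C - x)] with q hq
  exact hwin.two_point_nonneg hf ⟨hx.1, by linarith [hx.2, hy.1, hy.2]⟩
    ⟨by linarith [hx.1, hx.2, hy.1], hy.2⟩
    (by linarith [hy.1]) hq.1 (by nlinarith [hq.2, hy.1])

end IsUnbeatable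

lemma exists_pos_mul_sub_le_of_cross {P : ℝ → ℝ} {C : ℝ} (hC : 0 < C) (hC1 : C < 1)
    (hP : Continuous P)
    (hcross : ∀ x ∈ Ico 0 C, ∀ y ∈ Ioo C 1, 0 ≤ (y - C) * P x + (C - x) * P y)
    (hneg : ∃ y ∈ Ioo C 1, P y < 0) :
    ∃ l > 0, ∀ t ∈ Icc 0 1, l * (C - t) ≤ P t := by
  -- `l` is the largest slope `-P y / (y - C)` over `y > C`; by `hcross` it is at most every
  -- slope `P x / (C - x)` over `x < C`.
  set Λ := (fun y => -P y / (y - C)) '' Ioo C 1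
  have hle : ∀ x ∈ Ico 0 C, ∀ r ∈ Λ, r ≤ P x / (C - x) := by
    rintro x hx _ ⟨y, hy, rfl⟩
    rw [div_le_div_iff₀ (by linarith [hy.1]) (by linarith [hx.2])]
    nlinarith [hcross x hx y hy]
  obtain ⟨y₀, hy₀, hPy₀⟩ := hneg
  have hbdd : BddAbove Λ := ⟨_, hle 0 ⟨le_rfl, hC⟩⟩
  have hne : Λ.Nonempty := ⟨_, mem_image_of_mem _ hy₀⟩
  refine ⟨sSup Λ, (div_pos (neg_pos.2 hPy₀) (sub_pos.2 hy₀.1)).trans_le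
    (le_csSup hbdd (mem_image_of_mem _ hy₀)), ?_⟩
  have hleft : ∀ t ∈ Ioo 0 C, sSup Λ * (C - t) ≤ P t := fun t ht =>
    (le_div_iff₀ (sub_pos.2 ht.2)).1 (csSup_le hne (hle t (Ioo_subset_Ico_self ht)))
  have hright : ∀ t ∈ Ioo C 1, sSup Λ * (C - t) ≤ P t := fun t ht => by
    have := le_csSup hbdd (mem_image_of_mem _ ht)
    rw [div_le_iff₀ (sub_pos.2 ht.1)] at this
    linarith
  have hclosed : IsClosed {t | sSup Λ * (C - t) ≤ P t} :=
    isClosed_le (continuous_const.mul (continuous_const.sub continuous_id)) hP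
  have := closure_minimal (union_subset hleft hright) hclosed
  rwa [closure_union, closure_Ioo hC.ne, closure_Ioo hC1.ne,
    Icc_union_Icc_eq_Icc hC.le hC1.le] at this

lemma IsUnbeatable.exists_pos_mul_sub_le {C : ℝ} {f : ℝ → ℝ} (hC : 0 < C) (hC1 : C < 1)
    (hwin : IsUnbeatable C f) (hf : IsStrategy f) (hsupp : Function.support f ⊆ Icc 0 1) :
    ∃ l > 0, ∀ t ∈ Icc 0 1, l * (C - t) ≤ pointPayoff f t := by
  have hP := continuous_pointPayoff hf.integrable
  have hP1 : pointPayoff f 1 < 0 := by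
    rw [pointPayoff, cumMass_eq_totalMass hf.integrable zero_le_one
      (hsupp.trans Icc_subset_Iic_self)]
    linarith [hf.totalMass_pos]
  refine exists_pos_mul_sub_le_of_cross hC hC1 hP
    (fun x hx y hy => hwin.cross_nonneg hf.integrable hx hy) ?_
  obtain ⟨y, hPy, hy⟩ := ((((hP.tendsto 1).eventually (gt_mem_nhds hP1)).filter_mono
    nhdsWithin_le_nhds).and (Ioo_mem_nhdsLT hC1)).exists
  exact ⟨y, hy, hPy⟩

def contactSet (f : ℝ → ℝ) (l C : ℝ) : Set ℝ :=
  {t ∈ Icc 0 1 | pointPayoff f t = l * (C - t)}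

section ContactSet

variable {f : ℝ → ℝ} {l C : ℝ}

lemma isClosed_contactSet (hf : Integrable f) : IsClosed (contactSet f l C) :=
  isClosed_Icc.inter (isClosed_eq (continuous_pointPayoff hf)
    (continuous_const.mul (continuous_const.sub continuous_id)))

lemma ae_mem_contactSet (hf : IsStrategy f) (hsupp : Function.support f ⊆ Icc 0 1)
    (hl : 0 ≤ l) (hbound : ∀ t ∈ Icc 0 1, l * (C - t) ≤ pointPayoff f t) (hmca : mca f ≤ C) :
    ∀ᵐ t, f t ≠ 0 → t ∈ contactSet f l C := by
  have hnonneg : ∀ t ∈ Ioi (0 : ℝ), 0 ≤ f t * (pointPayoff f t - l * (C - t)) := fun t _ => by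
    by_cases ht : f t = 0
    · simp [ht]
    · exact mul_nonneg (hf.2.2.1 t) (sub_nonneg.2 (hbound t (hsupp ht)))
  have hnonneg_ae :
      0 ≤ᵐ[volume.restrict (Ioi 0)] fun t => f t * (pointPayoff f t - l * (C - t)) :=
    ae_restrict_of_forall_mem measurableSet_Ioi hnonneg
  have hint := integral_mul_pointPayoff_sub hf.integrable hf l C
  rw [wp_self hf.integrable] at hint
  have hzero := (integral_eq_zero_iff_of_nonneg_ae hnonneg_ae
    (integrable_mul_pointPayoff_sub hf.integrable hf l C).restrict).1
    (le_antisymm (by rw [hint]; nlinarith [hf.mca_le_iff.1 hmca])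
      (integral_nonneg_of_ae hnonneg_ae))
  filter_upwards [(ae_restrict_iff' measurableSet_Ioi).1 hzero, volume.ae_ne 0] with t ht ht0 hft
  have htI := hsupp hft
  refine ⟨htI, ?_⟩
  have := (mul_eq_zero.1 (ht (lt_of_le_of_ne htI.1 ht0.symm))).resolve_left hft
  linarith

lemma pointPayoff_eq_of_gap (hf : Integrable f) {Z : Set ℝ} (hZ : ∀ᵐ t, f t ≠ 0 → t ∈ Z)
    {a b : ℝ} (ha : 0 ≤ a) (hab : a ≤ b) (hgap : ∀ z ∈ Ioo a b, z ∉ Z) :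
    pointPayoff f b = pointPayoff f a := by
  have hzero : ∀ᵐ t ∂(volume.restrict (Ioc a b)), f t = 0 := by
    filter_upwards [ae_restrict_mem measurableSet_Ioc, ae_restrict_of_ae hZ,
      ae_restrict_of_ae (volume.ae_ne b)] with t ht htZ htb
    by_contra h
    exact hgap t ⟨ht.1, lt_of_le_of_ne ht.2 htb⟩ (htZ h)
  rw [pointPayoff, pointPayoff, cumMass_eq_of_ae_eq_zero hf ha hab hzero]

lemma mem_contactSet_of_le (hf : Integrable f) (hl : 0 < l)
    (hbound : ∀ t ∈ Icc 0 1, l * (C - t) ≤ pointPayoff f t)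
    (hZ : ∀ᵐ t, f t ≠ 0 → t ∈ contactSet f l C) {s t : ℝ} (hs : s ∈ contactSet f l C)
    (ht : t ∈ Icc 0 s) : t ∈ contactSet f l C := by
  by_contra htZ
  have hZc := isClosed_contactSet (l := l) (C := C) hf
  set Z := contactSet f l C
  set R := Z ∩ Icc t 1
  have hRbdd : BddBelow R := ⟨t, fun z hz => hz.2.1⟩
  have hb : sInf R ∈ R :=
    (hZc.inter isClosed_Icc).csInf_mem ⟨s, hs, ht.2, hs.1.2⟩ hRbdd
  -- `sSup L` is the last contact point before `t`, or `0` if there is none.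
  set L := insert 0 (Z ∩ Icc 0 t)
  have hLbdd : BddAbove L := ⟨t, by rintro z (rfl | hz); exacts [ht.1, hz.2.2]⟩
  have ha0 : 0 ≤ sSup L := le_csSup hLbdd (mem_insert 0 _)
  have hat : sSup L ≤ t :=
    csSup_le (insert_nonempty _ _) (by rintro z (rfl | hz); exacts [ht.1, hz.2.2])
  have htb : t < sInf R := lt_of_le_of_ne hb.2.1 fun h => htZ (h ▸ hb.1)
  have hgap : ∀ z ∈ Ioo (sSup L) (sInf R), z ∉ Z := fun z hz hzZ => by
    rcases le_total z t with hzt | hzt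
    · exact (le_csSup hLbdd (mem_insert_of_mem _ ⟨hzZ, ha0.trans hz.1.le, hzt⟩)).not_gt hz.1
    · exact (csInf_le hRbdd ⟨hzZ, hzt, hzZ.1.2⟩).not_gt hz.2
  have hPa := hbound _ ⟨ha0, hat.trans (ht.2.trans hs.1.2)⟩
  have hPb := hb.1.2
  rw [pointPayoff_eq_of_gap hf hZ ha0 (hat.trans htb.le) hgap] at hPb
  nlinarith

end ContactSet

lemma ae_eq_of_cumMass_eq_mul {f : ℝ → ℝ} (hf : Integrable f) {b c : ℝ}
    (h : ∀ t ∈ Icc 0 b, cumMass f t = c * t) : ∀ᵐ x ∂(volume.restrict (Icc 0 b)), f x = c := by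
  filter_upwards [ae_restrict_mem measurableSet_Icc,
    ae_restrict_of_ae (LocallyIntegrable.ae_hasDerivAt_integral hf.locallyIntegrable),
    ae_restrict_of_ae (volume.ae_ne 0), ae_restrict_of_ae (volume.ae_ne b)]
    with x hx hderiv hx0 hxb
  have hxI : x ∈ Ioo 0 b := ⟨lt_of_le_of_ne hx.1 hx0.symm, lt_of_le_of_ne hx.2 hxb⟩
  have hlin : (fun u => ∫ t in 0..u, f t) =ᶠ[𝓝 x] fun u => c * u := by
    filter_upwards [Ioo_mem_nhds hxI.1 hxI.2] with u hu
    rw [intervalIntegral.integral_of_le hu.1.le, ← cumMass, h u (Ioo_subset_Icc_self hu)]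
  exact (hderiv 0).unique
    (by simpa using ((hasDerivAt_id x).const_mul c).congr_of_eventuallyEq hlin)

lemma IsUnbeatable.exists_ae_eq {C : ℝ} {f : ℝ → ℝ} (hC : 0 < C) (hC1 : C < 1)
    (hwin : IsUnbeatable C f) (hf : IsStrategy f) (hsupp : Function.support f ⊆ Icc 0 1)
    (hmca : mca f ≤ C) :
    ∃ a : ℝ, 0 < a ∧ (∀ᵐ x ∂(volume.restrict (Icc 0 (2 * C))), f x = a) ∧
      (∀ᵐ x ∂(volume.restrict (Ioc (2 * C) 1)), f x = 0) := by
  obtain ⟨l, hl, hbound⟩ := hwin.exists_pos_mul_sub_le hC hC1 hf hsupp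
  set Z := contactSet f l C
  have hZ := ae_mem_contactSet hf hsupp hl.le hbound hmca
  have hinit : ∀ {s t}, s ∈ Z → t ∈ Icc 0 s → t ∈ Z :=
    mem_contactSet_of_le hf.integrable hl hbound hZ
  have hZne : Z.Nonempty := by
    by_contra hempty
    exact hf.2.2.2.2 (hZ.mono fun t ht => not_not.1 fun h => hempty ⟨t, ht h⟩)
  have hZbdd : BddAbove Z := ⟨1, fun z hz => hz.1.2⟩
  have hβ : sSup Z ∈ Z := (isClosed_contactSet hf.integrable).csSup_mem hZne hZbdd
  have hW : totalMass f = l * C := by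
    simpa [pointPayoff, cumMass_zero] using (hinit hβ ⟨le_rfl, hβ.1.1⟩).2
  have hbeyond : ∀ᵐ t ∂(volume.restrict (Ioi (sSup Z))), f t = 0 := by
    filter_upwards [ae_restrict_mem measurableSet_Ioi, ae_restrict_of_ae hZ] with t ht htZ
    by_contra h
    exact (le_csSup hZbdd (htZ h)).not_gt ht
  have hβ2C : sSup Z = 2 * C := by
    have hFβ : cumMass f (sSup Z) = totalMass f := by
      rw [totalMass_eq_cumMass_add hf.integrable hβ.1.1, integral_eq_zero_of_ae hbeyond,
        add_zero]
    have hP := hβ.2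
    rw [pointPayoff, hFβ, hW] at hP
    have : l * (sSup Z - 2 * C) = 0 := by linarith
    linarith [(mul_eq_zero.1 this).resolve_left hl.ne']
  have hF : ∀ t ∈ Icc 0 (2 * C), cumMass f t = l / 2 * t := fun t ht => by
    have hP := (hinit hβ (hβ2C ▸ ht)).2
    rw [pointPayoff, hW] at hP
    linarith
  refine ⟨l / 2, by positivity, ae_eq_of_cumMass_eq_mul hf.integrable hF, ?_⟩
  exact ae_restrict_of_ae_restrict_of_subset (hβ2C ▸ Ioc_subset_Ioi_self) hbeyond

theorem stmt12 (C : ℝ) (hC : C ∈ Ioo (0:ℝ) (1/2)) (f : ℝ → ℝ) (hf : IsStrategy f)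
    (hsupp : Function.support f ⊆ Icc (0:ℝ) 1) (hmca : mca f ≤ C) :
    (∀ g : ℝ → ℝ, IsStrategy g → Function.support g ⊆ Icc (0:ℝ) 1 → mca g ≤ C →
        0 ≤ wp f g) ↔
      ∃ a : ℝ, 0 < a ∧
        (∀ᵐ x ∂(volume.restrict (Icc (0:ℝ) (2*C))), f x = a) ∧
        (∀ᵐ x ∂(volume.restrict (Ioc (2*C) 1)), f x = 0) := by
  refine ⟨fun hwin => IsUnbeatable.exists_ae_eq hC.1 (by linarith [hC.2]) hwin hf hsupp hmca, ?_⟩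
  rintro ⟨a, ha, h_on, h_off⟩ g hg - hgC
  exact wp_nonneg_of_mul_sub_le_pointPayoff hf.integrable hg (by positivity : 0 ≤ 2 * a)
    (fun t ht => mul_sub_le_pointPayoff_of_ae_eq hC.1.le ha.le hf hsupp h_on h_off t ht.le) hgC
end

section
/- Fix a constraint value C > 0 and let n ≥ 2. If (f₁, …, fₙ) is an equilibrium point of the bounded measurable game, then wp(fₖ; f_j) = 0 for all j, k ∈ {1, …, n} and wp(fₖ; g) ≥ 0 for every admissible bounded measurable strategy g and every k; that is, each fₖ is an equilibrium strategy for the two-player game. -/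
open MeasureTheory Set

/-!
Write `K_h(x) = 2 ∫₀ˣ h - ∫₀^∞ h` (`advantage`), so that `wp g h = ∫ g K_h`; integration by parts
makes `wp` antisymmetric. Letting `f_j` play in place of `f_k` in the equilibrium inequalities
forces the antisymmetric matrix `wp (f j) (f k)` to vanish. Hence no admissible `g` gains against
`S_k = ∑_{ℓ ≠ k} f_ℓ`, nor, summing over `k`, against `ψ = ∑_ℓ f_ℓ`.

Two-bump test strategies show that such an unexploitable `h` satisfies `K_h(x) ≤ a (x - C)` on
`[0, ∞)` for some `a ≥ 0`, and since `∫ ψ(x) (x - C) ≤ 0` and `wp ψ h ≥ 0` there is equality on the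
support of `ψ`. Subtracting the lines for `S_k` and `ψ`, `K_{f_k}` agrees with a line `β (x - C)`
on the support of `ψ`; evaluating at the right end of that support gives `β ≥ 0`. Off the support
`K_{f_k}` is flat, so `K_{f_k}(x) ≤ β (x - C)` everywhere and `wp g f_k ≤ β (∫ t g - C ∫ g) ≤ 0`.
-/

namespace BoundedGame

open Filter Function Topology

structure IsPrestrategy (f : ℝ → ℝ) : Prop where
  measurable : Measurable f
  bddAbove : ∃ B, ∀ x, f x ≤ B
  nonneg : ∀ x, 0 ≤ f x
  support_subset : ∃ R, support f ⊆ Icc 0 R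

noncomputable def mass (f : ℝ → ℝ) (x : ℝ) : ℝ := ∫ t in Ioc 0 x, f t

noncomputable def total (f : ℝ → ℝ) : ℝ := ∫ t in Ioi 0, f t

noncomputable def moment (f : ℝ → ℝ) : ℝ := ∫ t in Ioi 0, t * f t

/-- The integrand of `wp · h` once `∫ₓ^∞ h` is written as `total h - mass h x`. -/
noncomputable def advantage (h : ℝ → ℝ) (x : ℝ) : ℝ := 2 * mass h x - total h

def IsUnexploitable (C : ℝ) (h : ℝ → ℝ) : Prop :=
  ∀ g, IsStrategy g → mca g ≤ C → wp g h ≤ 0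

theorem _root_.IsStrategy.isPrestrategy {f : ℝ → ℝ} (hf : IsStrategy f) : IsPrestrategy f :=
  ⟨hf.1, hf.2.1, hf.2.2.1, hf.2.2.2.1⟩

namespace IsPrestrategy

variable {f g : ℝ → ℝ}

theorem integrable_mul (hf : IsPrestrategy f) {φ : ℝ → ℝ} (hφ : Continuous φ) :
    Integrable (fun x => f x * φ x) := by
  obtain ⟨B, hB⟩ := hf.bddAbove
  obtain ⟨R, hR⟩ := hf.support_subset
  have hfR : IntegrableOn f (Icc 0 R) :=
    Measure.integrableOn_of_bounded measure_Icc_lt_top.ne hf.measurable.aestronglyMeasurable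
      (ae_of_all _ fun x => by
        rw [Real.norm_of_nonneg (hf.nonneg x)]; exact hB x)
  refine (integrableOn_iff_integrable_of_support_subset ?_).1
    (hfR.mul_continuousOn hφ.continuousOn isCompact_Icc)
  exact (support_mul_subset_left _ _).trans hR

theorem integrable (hf : IsPrestrategy f) : Integrable f := by
  simpa using hf.integrable_mul continuous_const (φ := fun _ => 1)

theorem integrable_id_mul (hf : IsPrestrategy f) : Integrable fun x => x * f x :=
  (hf.integrable_mul continuous_id).congr (ae_of_all _ fun x => mul_comm (f x) x)

theorem add (hf : IsPrestrategy f) (hg : IsPrestrategy g) : IsPrestrategy (f + g) := by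
  obtain ⟨B, hB⟩ := hf.bddAbove
  obtain ⟨B', hB'⟩ := hg.bddAbove
  obtain ⟨R, hR⟩ := hf.support_subset
  obtain ⟨R', hR'⟩ := hg.support_subset
  refine ⟨hf.measurable.add hg.measurable, ⟨B + B', fun x => add_le_add (hB x) (hB' x)⟩,
    fun x => add_nonneg (hf.nonneg x) (hg.nonneg x), ⟨max R R', ?_⟩⟩
  refine (support_add _ _).trans (union_subset ?_ ?_)
  · exact hR.trans (Icc_subset_Icc le_rfl (le_max_left _ _))
  · exact hR'.trans (Icc_subset_Icc le_rfl (le_max_right _ _))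

theorem zero : IsPrestrategy 0 :=
  ⟨measurable_const, ⟨0, fun _ => le_rfl⟩, fun _ => le_rfl, ⟨0, by simp⟩⟩

theorem finset_sum {ι : Type*} (s : Finset ι) {f : ι → ℝ → ℝ}
    (hf : ∀ i ∈ s, IsPrestrategy (f i)) : IsPrestrategy (fun x => ∑ i ∈ s, f i x) := by
  classical
  induction s using Finset.induction_on with
  | empty => exact zero
  | insert a s ha ih =>
    simp only [Finset.sum_insert ha]
    exact (hf a (s.mem_insert_self a)).add (ih fun i hi => hf i (Finset.mem_insert_of_mem hi))

end IsPrestrategy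

theorem isPrestrategy_indicator_Ioc {u v c : ℝ} (hu : 0 ≤ u) (hc : 0 ≤ c) :
    IsPrestrategy ((Ioc u v).indicator fun _ => c) := by
  refine ⟨measurable_const.indicator measurableSet_Ioc, ⟨c, fun x => ?_⟩,
    fun x => indicator_nonneg (fun _ _ => hc) x, ⟨v, ?_⟩⟩
  · exact indicator_le_self' (fun _ _ => hc) x
  · exact support_indicator_subset.trans fun t ht => ⟨hu.trans ht.1.le, ht.2⟩

section Mass

variable {f g : ℝ → ℝ}

theorem mass_of_nonpos {x : ℝ} (hx : x ≤ 0) : mass f x = 0 := by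
  simp [mass, Ioc_eq_empty hx.not_gt]

theorem mass_zero : mass f 0 = 0 := mass_of_nonpos le_rfl

theorem mass_mono (hf : IsPrestrategy f) : Monotone (mass f) := fun _ _ hxy =>
  setIntegral_mono_set hf.integrable.integrableOn (ae_of_all _ hf.nonneg)
    (Ioc_subset_Ioc le_rfl hxy).eventuallyLE

theorem mass_le_total (hf : IsPrestrategy f) (x : ℝ) : mass f x ≤ total f :=
  setIntegral_mono_set hf.integrable.integrableOn (ae_of_all _ hf.nonneg)
    Ioc_subset_Ioi_self.eventuallyLE

theorem total_nonneg (hf : IsPrestrategy f) : 0 ≤ total f :=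
  setIntegral_nonneg measurableSet_Ioi fun t _ => hf.nonneg t

theorem mass_add_integral_Ioi (hf : IsPrestrategy f) {x : ℝ} (hx : 0 ≤ x) :
    mass f x + ∫ t in Ioi x, f t = total f := by
  rw [mass, total, ← setIntegral_union (Ioc_disjoint_Ioi le_rfl) measurableSet_Ioi
    hf.integrable.integrableOn hf.integrable.integrableOn, Ioc_union_Ioi_eq_Ioi hx]

theorem mass_sub_mass (hf : IsPrestrategy f) {u v : ℝ} (hu : 0 ≤ u) (huv : u ≤ v) :
    mass f v - mass f u = ∫ t in Ioc u v, f t := by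
  rw [mass, mass, ← Ioc_union_Ioc_eq_Ioc hu huv, setIntegral_union (Ioc_disjoint_Ioc_of_le le_rfl)
    measurableSet_Ioc hf.integrable.integrableOn hf.integrable.integrableOn, add_sub_cancel_left]

theorem exists_mass_eq_total (hf : IsPrestrategy f) : ∃ R, 0 ≤ R ∧ mass f R = total f := by
  obtain ⟨R, hR⟩ := hf.support_subset
  refine ⟨max R 0, le_max_right _ _, ?_⟩
  have hzero : ∫ t in Ioi (max R 0), f t = 0 :=
    setIntegral_eq_zero_of_forall_eq_zero fun t ht =>
      notMem_support.1 fun hs => ((hR hs).2.trans (le_max_left R 0)).not_gt ht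
  linarith [mass_add_integral_Ioi hf (le_max_right R 0)]

theorem continuous_mass (hf : IsPrestrategy f) : Continuous (mass f) := by
  have hmass : mass f = (fun x => ∫ t in (0:ℝ)..x, f t) ∘ fun x => max x 0 := by
    ext x
    rcases le_total x 0 with hx | hx
    · simp [mass_of_nonpos hx, max_eq_right hx]
    · simp [mass, max_eq_left hx, intervalIntegral.integral_of_le hx]
  rw [hmass]
  exact (intervalIntegral.continuous_primitive (fun _ _ => hf.integrable.intervalIntegrable) 0).comp
    (continuous_id.max continuous_const)

theorem mass_add (hf : IsPrestrategy f) (hg : IsPrestrategy g) (x : ℝ) :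
    mass (f + g) x = mass f x + mass g x :=
  integral_add hf.integrable.integrableOn hg.integrable.integrableOn

theorem total_add (hf : IsPrestrategy f) (hg : IsPrestrategy g) :
    total (f + g) = total f + total g :=
  integral_add hf.integrable.integrableOn hg.integrable.integrableOn

theorem continuous_advantage (hf : IsPrestrategy f) : Continuous (advantage f) :=
  (continuous_const.mul (continuous_mass hf)).sub continuous_const

theorem advantage_mono (hf : IsPrestrategy f) : Monotone (advantage f) := fun _ _ hxy => by
  have := mass_mono hf hxy
  unfold advantage; linarith

theorem advantage_zero : advantage f 0 = -total f := by simp [advantage, mass_zero]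

theorem advantage_add (hf : IsPrestrategy f) (hg : IsPrestrategy g) (x : ℝ) :
    advantage (f + g) x = advantage f x + advantage g x := by
  simp only [advantage, mass_add hf hg, total_add hf hg]; ring

end Mass

section Payoff

variable {f g : ℝ → ℝ}

theorem wp_eq_integral_mul_advantage (hg : IsPrestrategy g) (f : ℝ → ℝ) :
    wp f g = ∫ x in Ioi 0, f x * advantage g x := by
  refine setIntegral_congr_fun measurableSet_Ioi fun x hx => ?_
  have := mass_add_integral_Ioi hg (le_of_lt hx)
  simp only [advantage, mass] at this ⊢
  rw [show ∫ t in Ioi x, g t = total g - ∫ t in Ioc 0 x, g t by linarith]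
  ring

theorem wp_eq_two_mul_sub (hf : IsPrestrategy f) (hg : IsPrestrategy g) :
    wp f g = 2 * (∫ x in Ioi 0, f x * mass g x) - total f * total g := by
  rw [wp_eq_integral_mul_advantage hg, total, ← integral_const_mul, ← integral_mul_const,
    ← integral_sub ((hf.integrable_mul (continuous_mass hg)).const_mul 2).restrict
      (hf.integrable.mul_const _).restrict]
  congr 1; ext x; simp only [advantage]; ring

theorem integral_Iic_restrict_Ioi_eq_mass (g : ℝ → ℝ) (x : ℝ) :
    ∫ t in Iic x, g t ∂volume.restrict (Ioi 0) = mass g x := by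
  rw [Measure.restrict_restrict measurableSet_Iic, Iic_inter_Ioi, mass]

/-- Integration by parts, via Fubini on the region `{0 < t ≤ x}`. -/
theorem integral_mul_mass_add (hf : IsPrestrategy f) (hg : IsPrestrategy g) :
    (∫ x in Ioi 0, f x * mass g x) + ∫ t in Ioi 0, g t * mass f t = total f * total g := by
  set μ := volume.restrict (Ioi (0:ℝ))
  set φ : ℝ → ℝ → ℝ := fun x t => {p : ℝ × ℝ | p.2 ≤ p.1}.indicator (fun p => f p.1 * g p.2) (x, t)
  have hφ : Integrable (uncurry φ) (μ.prod μ) :=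
    (hf.integrable.restrict.mul_prod hg.integrable.restrict).indicator
      (measurableSet_le measurable_snd measurable_fst)
  have hx : ∀ x, ∫ t, φ x t ∂μ = f x * mass g x := fun x => by
    rw [← integral_Iic_restrict_Ioi_eq_mass, ← integral_const_mul, ← integral_indicator measurableSet_Iic]
    rfl
  have ht : ∀ t ∈ Ioi (0:ℝ), ∫ x, φ x t ∂μ = g t * (total f - mass f t) := fun t ht => by
    have hsplit := mass_add_integral_Ioi hf (le_of_lt ht)
    have : ∫ x, φ x t ∂μ = ∫ x in Ici t, f x * g t ∂μ := by
      rw [← integral_indicator measurableSet_Ici]; rfl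
    rw [this, integral_Ici_eq_integral_Ioi, Measure.restrict_restrict measurableSet_Ioi,
      Ioi_inter_Ioi, max_eq_left (le_of_lt ht), integral_mul_const]
    rw [show ∫ x in Ioi t, f x = total f - mass f t by linarith]
    ring
  have hswap := integral_integral_swap hφ
  simp only [hx] at hswap
  rw [setIntegral_congr_fun measurableSet_Ioi ht] at hswap
  have hT : Continuous fun t => total f - mass f t := continuous_const.sub (continuous_mass hf)
  rw [hswap, ← integral_add (hg.integrable_mul hT).restrict
    (hg.integrable_mul (continuous_mass hf)).restrict]
  simp_rw [← mul_add, sub_add_cancel]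
  rw [integral_mul_const, total, total, mul_comm]

theorem wp_antisymm (hf : IsPrestrategy f) (hg : IsPrestrategy g) : wp f g = -wp g f := by
  rw [wp_eq_two_mul_sub hf hg, wp_eq_two_mul_sub hg hf]
  linarith [integral_mul_mass_add hf hg]

theorem wp_self (hf : IsPrestrategy f) : wp f f = 0 := by
  linarith [wp_antisymm hf hf]

theorem wp_finset_sum_left {ι : Type*} (s : Finset ι) {f : ι → ℝ → ℝ}
    (hf : ∀ i ∈ s, IsPrestrategy (f i)) (hg : IsPrestrategy g) :
    wp (fun x => ∑ i ∈ s, f i x) g = ∑ i ∈ s, wp (f i) g := by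
  simp only [wp_eq_integral_mul_advantage hg, Finset.sum_mul]
  exact integral_finsetSum s fun i hi =>
    ((hf i hi).integrable_mul (continuous_advantage hg)).restrict

theorem wp_finset_sum_right {ι : Type*} (s : Finset ι) {f : ι → ℝ → ℝ}
    (hf : ∀ i ∈ s, IsPrestrategy (f i)) (hg : IsPrestrategy g) :
    wp g (fun x => ∑ i ∈ s, f i x) = ∑ i ∈ s, wp g (f i) := by
  rw [wp_antisymm hg (IsPrestrategy.finset_sum s hf), wp_finset_sum_left s hf hg,
    ← Finset.sum_neg_distrib]
  exact Finset.sum_congr rfl fun i hi => (wp_antisymm hg (hf i hi)).symm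

end Payoff

theorem eq_zero_of_antisymm_of_sum_erase_le {ι : Type*} [Fintype ι] [DecidableEq ι]
    [Nontrivial ι] {w : ι → ι → ℝ} (hanti : ∀ j k, w j k = -w k j)
    (hle : ∀ j k, ∑ ℓ ∈ Finset.univ.erase k, w j ℓ ≤ ∑ ℓ ∈ Finset.univ.erase k, w k ℓ)
    (j k : ι) : w j k = 0 := by
  set r : ι → ℝ := fun j => ∑ ℓ, w j ℓ
  have hdiag : ∀ j, w j j = 0 := fun j => by linarith [hanti j j]
  have hle' : ∀ j k, r j - w j k ≤ r k := fun j k => by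
    have := hle j k
    rwa [Finset.sum_erase_eq_sub (Finset.mem_univ k), Finset.sum_erase_eq_sub (Finset.mem_univ k),
      hdiag, sub_zero] at this
  have hw : ∀ j k, w j k = r j - r k := fun j k => by
    linarith [hle' j k, hle' k j, hanti k j]
  have hsum : ∑ j, r j = 0 := by
    have : ∑ j, r j = -∑ j, r j := calc
      ∑ j, r j = ∑ j, ∑ k, -w k j :=
        Finset.sum_congr rfl fun j _ => Finset.sum_congr rfl fun k _ => hanti j k
      _ = -∑ j, r j := by rw [Finset.sum_comm]; simp only [r, Finset.sum_neg_distrib]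
    linarith
  have hr : ∀ j, r j = 0 := fun j => by
    have h : r j = Fintype.card ι * r j - ∑ k, r k := by
      conv_lhs => simp only [r]
      simp only [hw j, Finset.sum_sub_distrib, Finset.sum_const, Finset.card_univ, nsmul_eq_mul]
    have hcard : (1 : ℝ) < Fintype.card ι := by exact_mod_cast Fintype.one_lt_card
    rw [hsum, sub_zero] at h
    nlinarith
  rw [hw, hr, hr, sub_zero]

section TestFunctions

variable {f : ℝ → ℝ}

theorem _root_.IsStrategy.total_pos (hf : IsStrategy f) : 0 < total f := by
  have hP := hf.isPrestrategy
  rw [total, setIntegral_pos_iff_support_of_nonneg_ae (ae_of_all _ hP.nonneg)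
    hP.integrable.integrableOn]
  obtain ⟨R, hR⟩ := hP.support_subset
  have hsupp : volume (support f) ≠ 0 := fun h => hf.2.2.2.2 (ae_iff.2 h)
  refine pos_iff_ne_zero.2 fun h => hsupp (measure_mono_null (t := (support f ∩ Ioi 0) ∪ {0})
    (fun x hx => ?_) (measure_union_null h (measure_singleton 0)))
  rcases (hR hx).1.lt_or_eq with hpos | rfl
  · exact Or.inl ⟨hx, hpos⟩
  · exact Or.inr rfl

theorem IsPrestrategy.isStrategy (hf : IsPrestrategy f) (hpos : 0 < total f) : IsStrategy f := by
  refine ⟨hf.measurable, hf.bddAbove, hf.nonneg, hf.support_subset, fun h => hpos.ne' ?_⟩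
  rw [total, integral_congr_ae (ae_restrict_of_ae h)]
  simp

theorem mca_le_iff (hf : IsStrategy f) {C : ℝ} : mca f ≤ C ↔ moment f ≤ C * total f :=
  div_le_iff₀ hf.total_pos

theorem moment_finset_sum_le_mul_total {ι : Type*} (s : Finset ι) {f : ι → ℝ → ℝ} {C : ℝ}
    (hf : ∀ i ∈ s, IsStrategy (f i)) (hC : ∀ i ∈ s, mca (f i) ≤ C) :
    moment (fun x => ∑ i ∈ s, f i x) ≤ C * total (fun x => ∑ i ∈ s, f i x) := by
  simp only [moment, total, Finset.mul_sum]
  rw [integral_finsetSum s fun i hi => (hf i hi).isPrestrategy.integrable_id_mul.restrict,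
    integral_finsetSum s fun i hi => (hf i hi).isPrestrategy.integrable.restrict, Finset.mul_sum]
  exact Finset.sum_le_sum fun i hi => (mca_le_iff (hf i hi)).1 (hC i hi)

theorem total_finset_sum_pos {ι : Type*} {s : Finset ι} (hs : s.Nonempty) {f : ι → ℝ → ℝ}
    (hf : ∀ i ∈ s, IsStrategy (f i)) : 0 < total (fun x => ∑ i ∈ s, f i x) := by
  rw [total, integral_finsetSum s fun i hi => (hf i hi).isPrestrategy.integrable.restrict]
  exact Finset.sum_pos (fun i hi => (hf i hi).total_pos) hs

theorem integral_indicator_Ioc_mul {u v : ℝ} (hu : 0 ≤ u) (c : ℝ) (φ : ℝ → ℝ) :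
    ∫ t in Ioi 0, (Ioc u v).indicator (fun _ => c) t * φ t = c * ∫ t in Ioc u v, φ t := by
  simp_rw [← indicator_mul_left]
  rw [setIntegral_indicator measurableSet_Ioc, integral_const_mul,
    inter_eq_self_of_subset_right (Ioc_subset_Ioi_self.trans (Ioi_subset_Ioi hu))]

theorem mul_le_integral_advantage (hf : IsPrestrategy f) {u v : ℝ} (huv : u ≤ v) :
    (v - u) * advantage f u ≤ ∫ x in Ioc u v, advantage f x := by
  have := setIntegral_mono_on (s := Ioc u v) (μ := volume)
    (integrableOn_const measure_Ioc_lt_top.ne) (continuous_advantage hf).integrableOn_Ioc measurableSet_Ioc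
    fun x hx => advantage_mono hf hx.1.le
  rwa [setIntegral_const, Real.volume_real_Ioc_of_le huv, smul_eq_mul] at this

end TestFunctions

section TwoPlayer

variable {C : ℝ} {h : ℝ → ℝ}

/-- The mixture of the bumps `(x, x+e]` and `(y, y+e]` with these weights has mean competitive
ability exactly `C`. -/
theorem IsUnexploitable.two_bump_nonpos (hh : IsPrestrategy h) (hU : IsUnexploitable C h)
    {x y e : ℝ} (hx : 0 ≤ x) (hCy : C < y) (he : 0 < e) (heC : e < 2 * (C - x)) :
    (y - C + e / 2) * advantage h x + (C - x - e / 2) * advantage h y ≤ 0 := by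
  have hα : 0 < y - C + e / 2 := by positivity
  have hβ : 0 < C - x - e / 2 := by linarith
  set α := y - C + e / 2
  set β := C - x - e / 2
  have hy : 0 ≤ y := by linarith
  have hbx := isPrestrategy_indicator_Ioc (v := x + e) hx hα.le
  have hby := isPrestrategy_indicator_Ioc (v := y + e) hy hβ.le
  set g := (Ioc x (x + e)).indicator (fun _ => α) + (Ioc y (y + e)).indicator (fun _ => β)
  have hint : ∀ φ : ℝ → ℝ, Continuous φ → ∫ t in Ioi 0, g t * φ t =
      α * (∫ t in Ioc x (x + e), φ t) + β * ∫ t in Ioc y (y + e), φ t := fun φ hφ => by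
    simp only [g, Pi.add_apply, add_mul]
    rw [integral_add (hbx.integrable_mul hφ).restrict (hby.integrable_mul hφ).restrict,
      integral_indicator_Ioc_mul hx, integral_indicator_Ioc_mul hy]
  have hxe : x ≤ x + e := by linarith
  have hye : y ≤ y + e := by linarith
  have htotal : total g = e * (y - x) := by
    have := hint (fun _ => 1) continuous_const
    simp only [mul_one, integral_const, smul_eq_mul, measureReal_restrict_apply_univ,
      Real.volume_real_Ioc_of_le hxe, Real.volume_real_Ioc_of_le hye] at this
    rw [total, this]; ring
  have hmoment : moment g = C * total g := by
    have := hint id continuous_id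
    simp only [id, ← intervalIntegral.integral_of_le hxe, ← intervalIntegral.integral_of_le hye,
      integral_id] at this
    rw [moment, htotal]
    simp_rw [mul_comm _ (g _)]
    rw [this]; ring
  have hg : IsStrategy g := (hbx.add hby).isStrategy (by rw [htotal]; nlinarith)
  have hwp := hU g hg ((mca_le_iff hg).2 hmoment.le)
  rw [wp_eq_integral_mul_advantage hh, hint _ (continuous_advantage hh)] at hwp
  have h1 := mul_le_mul_of_nonneg_left (mul_le_integral_advantage hh hxe) hα.le
  have h2 := mul_le_mul_of_nonneg_left (mul_le_integral_advantage hh hye) hβ.le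
  rw [add_sub_cancel_left] at h1 h2
  nlinarith

theorem IsUnexploitable.chord_nonpos (hh : IsPrestrategy h) (hU : IsUnexploitable C h)
    {x y : ℝ} (hx : 0 ≤ x) (hxC : x < C) (hCy : C < y) :
    (y - C) * advantage h x + (C - x) * advantage h y ≤ 0 := by
  set c := (advantage h y - advantage h x) / 2
  have hlim : Tendsto (fun e => e * c) (𝓝[>] 0) (𝓝 0) :=
    tendsto_nhdsWithin_of_tendsto_nhds (by simpa using (continuous_mul_const c).tendsto 0)
  refine ge_of_tendsto hlim (eventually_of_mem (Ioo_mem_nhdsGT (show 0 < 2 * (C - x) by linarith))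
    fun e he => ?_)
  linear_combination hU.two_bump_nonpos hh hx hCy he.1 he.2

theorem IsUnexploitable.advantage_nonpos (hC : 0 < C) (hh : IsPrestrategy h)
    (hU : IsUnexploitable C h) : advantage h C ≤ 0 := by
  set φ := fun x => (C + 1 - C) * advantage h x + (C - x) * advantage h (C + 1)
  have hφ : Continuous φ := (continuous_const.mul (continuous_advantage hh)).add
    ((continuous_const.sub continuous_id).mul continuous_const)
  have := le_of_tendsto ((hφ.tendsto C).mono_left nhdsWithin_le_nhds)
    (eventually_of_mem (Ioo_mem_nhdsLT hC) fun x hx =>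
      hU.chord_nonpos hh hx.1.le hx.2 (lt_add_one C))
  simpa [φ] using this

theorem IsUnexploitable.exists_advantage_le (hC : 0 < C) (hh : IsPrestrategy h)
    (hU : IsUnexploitable C h) : ∃ a, 0 ≤ a ∧ ∀ x, 0 ≤ x → advantage h x ≤ a * (x - C) := by
  set S := (fun x => -advantage h x / (C - x)) '' Ico 0 C
  have hS : ∀ s ∈ S, 0 ≤ s := by
    rintro _ ⟨x, hx, rfl⟩
    have := (advantage_mono hh hx.2.le).trans (hU.advantage_nonpos hC hh)
    exact div_nonneg (by linarith) (by linarith [hx.2])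
  have hne : S.Nonempty := ⟨_, mem_image_of_mem _ ⟨le_rfl, hC⟩⟩
  refine ⟨sInf S, le_csInf hne hS, fun x hx => ?_⟩
  rcases lt_trichotomy x C with hxC | rfl | hCx
  · have := csInf_le ⟨0, hS⟩ (mem_image_of_mem _ ⟨hx, hxC⟩)
    rw [le_div_iff₀ (by linarith)] at this
    linarith
  · simpa using hU.advantage_nonpos hC hh
  · have : advantage h x / (x - C) ≤ sInf S := by
      refine le_csInf hne ?_
      rintro _ ⟨x', hx', rfl⟩
      rw [div_le_div_iff₀ (by linarith) (by linarith [hx'.2])]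
      linarith [hU.chord_nonpos hh hx'.1 hx'.2 hCx]
    rwa [div_le_iff₀ (by linarith)] at this

theorem integral_mul_linear {g : ℝ → ℝ} (hg : IsPrestrategy g) (a C : ℝ) :
    ∫ x in Ioi 0, g x * (a * (x - C)) = a * (moment g - C * total g) := by
  have hlin : ∀ x, g x * (a * (x - C)) = a * (x * g x) - a * C * g x := fun x => by ring
  simp_rw [hlin]
  rw [integral_sub (hg.integrable_id_mul.const_mul a).restrict (hg.integrable.const_mul _).restrict,
    integral_const_mul, integral_const_mul, moment, total]
  ring

theorem isUnexploitable_of_advantage_le (hh : IsPrestrategy h) {a : ℝ} (ha : 0 ≤ a)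
    (hle : ∀ x, 0 ≤ x → advantage h x ≤ a * (x - C)) : IsUnexploitable C h := by
  intro g hg hgC
  have hgP := hg.isPrestrategy
  rw [wp_eq_integral_mul_advantage hh]
  calc ∫ x in Ioi 0, g x * advantage h x ≤ ∫ x in Ioi 0, g x * (a * (x - C)) :=
        setIntegral_mono_on (hgP.integrable_mul (continuous_advantage hh)).restrict
          (hgP.integrable_mul (by fun_prop)).restrict measurableSet_Ioi
          fun x hx => mul_le_mul_of_nonneg_left (hle x (le_of_lt hx)) (hgP.nonneg x)
    _ = a * (moment g - C * total g) := integral_mul_linear hgP a C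
    _ ≤ 0 := mul_nonpos_of_nonneg_of_nonpos ha (by linarith [(mca_le_iff hg).1 hgC])

theorem ae_mul_sub_advantage_eq_zero {p : ℝ → ℝ} (hp : IsPrestrategy p) (hh : IsPrestrategy h)
    {a : ℝ} (ha : 0 ≤ a) (hle : ∀ x, 0 ≤ x → advantage h x ≤ a * (x - C))
    (hmoment : moment p ≤ C * total p) (hwp : 0 ≤ wp p h) :
    ∀ᵐ x ∂volume.restrict (Ioi 0), p x * (a * (x - C) - advantage h x) = 0 := by
  have hnonneg : 0 ≤ᵐ[volume.restrict (Ioi 0)] fun x => p x * (a * (x - C) - advantage h x) :=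
    (ae_restrict_mem measurableSet_Ioi).mono fun x hx =>
      mul_nonneg (hp.nonneg x) (sub_nonneg.2 (hle x (le_of_lt hx)))
  have hint : Integrable (fun x => p x * (a * (x - C) - advantage h x)) :=
    hp.integrable_mul (by have := continuous_advantage hh; fun_prop)
  have hzero : ∫ x in Ioi 0, p x * (a * (x - C) - advantage h x) = 0 := by
    refine le_antisymm ?_ (integral_nonneg_of_ae hnonneg)
    calc ∫ x in Ioi 0, p x * (a * (x - C) - advantage h x)
        = (∫ x in Ioi 0, p x * (a * (x - C))) - ∫ x in Ioi 0, p x * advantage h x := by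
          rw [← integral_sub (hp.integrable_mul (by fun_prop)).restrict
            (hp.integrable_mul (continuous_advantage hh)).restrict]
          simp_rw [mul_sub]
      _ = a * (moment p - C * total p) - wp p h := by
          rw [integral_mul_linear hp, wp_eq_integral_mul_advantage hh]
      _ ≤ 0 := by nlinarith
  exact (integral_eq_zero_iff_of_nonneg_ae hnonneg hint.restrict).1 hzero

theorem mass_eq_of_ae_mul_eq_zero {p D : ℝ → ℝ} (hp : IsPrestrategy p)
    (hD : ∀ᵐ x ∂volume.restrict (Ioi 0), p x * D x = 0) {u v : ℝ} (hu : 0 ≤ u) (huv : u ≤ v)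
    (hne : ∀ t ∈ Ioc u v, D t ≠ 0) : mass p v = mass p u := by
  have hzero : ∀ᵐ t ∂volume.restrict (Ioc u v), p t = 0 := by
    filter_upwards [ae_restrict_of_ae_restrict_of_subset
      (Ioc_subset_Ioi_self.trans (Ioi_subset_Ioi hu)) hD, ae_restrict_mem measurableSet_Ioc]
      with t ht htuv
    exact (mul_eq_zero.1 ht).resolve_right (hne t htuv)
  rw [← sub_eq_zero, mass_sub_mass hp hu huv, integral_congr_ae hzero, integral_zero]

/-- `M` is the right end of the essential support of `p`: a continuous `D` that is nonzero at `M`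
is nonzero on a left neighbourhood of `M`, where `p` would then vanish. -/
theorem exists_mass_eq_total_forall_eq_zero {p : ℝ → ℝ} (hp : IsPrestrategy p)
    (hpos : 0 < total p) : ∃ M, mass p M = total p ∧ ∀ D : ℝ → ℝ, Continuous D →
      (∀ᵐ x ∂volume.restrict (Ioi 0), p x * D x = 0) → D M = 0 := by
  set S := {x | 0 ≤ x ∧ mass p x = total p}
  have hclosed : IsClosed S :=
    (isClosed_le continuous_const continuous_id).inter
      (isClosed_eq (continuous_mass hp) continuous_const)
  have hne : S.Nonempty := exists_mass_eq_total hp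
  have hbdd : BddBelow S := ⟨0, fun x hx => hx.1⟩
  obtain ⟨hM0, hMmass⟩ := hclosed.csInf_mem hne hbdd
  refine ⟨sInf S, hMmass, fun D hDc hD => ?_⟩
  by_contra hDM
  obtain ⟨u, hu, huD⟩ := mem_nhdsLE_iff_exists_Ioc_subset.1
    (nhdsWithin_le_nhds (hDc.continuousAt.eventually_ne hDM))
  have hMpos : 0 < sInf S := lt_of_le_of_ne hM0 fun h => by
    rw [← h, mass_zero] at hMmass; exact hpos.ne hMmass
  have hu' : max u 0 < sInf S := max_lt hu hMpos
  have hmass := mass_eq_of_ae_mul_eq_zero hp hD (le_max_right u 0) hu'.le fun t ht =>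
    huD ⟨(le_max_left u 0).trans_lt ht.1, ht.2⟩
  exact hu'.not_ge (csInf_le hbdd ⟨le_max_right u 0, hmass ▸ hMmass⟩)

theorem nonneg_of_forall_Ioc_neg_le {E : ℝ → ℝ} (hE : Continuous E) (h0 : 0 ≤ E 0)
    (hgap : ∀ u v, 0 ≤ u → u ≤ v → (∀ t ∈ Ioc u v, E t < 0) → E u ≤ E v)
    {x : ℝ} (hx : 0 ≤ x) : 0 ≤ E x := by
  set S := {t | t ∈ Icc 0 x ∧ 0 ≤ E t}
  have hclosed : IsClosed S := isClosed_Icc.inter (isClosed_le continuous_const hE)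
  have hbdd : BddAbove S := ⟨x, fun t ht => ht.1.2⟩
  obtain ⟨⟨hs0, hsx⟩, hEs⟩ := hclosed.csSup_mem ⟨0, ⟨le_rfl, hx⟩, h0⟩ hbdd
  refine hEs.trans (hgap _ _ hs0 hsx fun t ht => not_le.1 fun hEt => ?_)
  exact ht.1.not_ge (le_csSup hbdd ⟨⟨hs0.trans ht.1.le, ht.2⟩, hEt⟩)

/-- Off the support of `p` the advantage of `p` is flat while the line rises. -/
theorem advantage_le_of_ae_eq {p : ℝ → ℝ} (hp : IsPrestrategy p) {β : ℝ} (hβ : 0 ≤ β)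
    (h0 : β * C ≤ total p)
    (hae : ∀ᵐ x ∂volume.restrict (Ioi 0), p x * (β * (x - C) - advantage p x) = 0)
    {x : ℝ} (hx : 0 ≤ x) : advantage p x ≤ β * (x - C) := by
  have hE : Continuous fun x => β * (x - C) - advantage p x := by
    have := continuous_advantage hp; fun_prop
  refine sub_nonneg.1 (nonneg_of_forall_Ioc_neg_le hE ?_ (fun u v hu huv hneg => ?_) hx)
  · rw [advantage_zero]; linarith
  · have := mass_eq_of_ae_mul_eq_zero hp hae hu huv fun t ht => (hneg t ht).ne
    simp only [advantage, this]
    nlinarith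

theorem IsUnexploitable.of_add (hC : 0 < C) {f : ℝ → ℝ} (hh : IsPrestrategy h)
    (hf : IsPrestrategy f) (hUh : IsUnexploitable C h) (hUψ : IsUnexploitable C (h + f))
    (hpos : 0 < total (h + f)) (hmoment : moment (h + f) ≤ C * total (h + f))
    (hwp : 0 ≤ wp (h + f) h) : IsUnexploitable C f := by
  have hψ := hh.add hf
  obtain ⟨a, ha, hah⟩ := hUh.exists_advantage_le hC hh
  obtain ⟨b, hb, hbψ⟩ := hUψ.exists_advantage_le hC hψ
  have haeh := ae_mul_sub_advantage_eq_zero hψ hh ha hah hmoment hwp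
  have haeψ := ae_mul_sub_advantage_eq_zero hψ hψ hb hbψ hmoment (wp_self hψ).ge
  obtain ⟨M, hMmass, hMzero⟩ := exists_mass_eq_total_forall_eq_zero hψ hpos
  have hKh : a * (M - C) = total h := by
    have := hMzero _ (by have := continuous_advantage hh; fun_prop) haeh
    rw [mass_add hh hf, total_add hh hf] at hMmass
    simp only [advantage] at this
    linarith [mass_le_total hh M, mass_le_total hf M]
  have hKψ : b * (M - C) = total (h + f) := by
    have := hMzero _ (by have := continuous_advantage hψ; fun_prop) haeψ
    simp only [advantage, hMmass] at this
    linarith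
  have hMC : C < M := lt_of_not_ge fun hMC => by nlinarith
  have h2C : 2 * C ≤ M := by
    have := hbψ 0 le_rfl
    rw [advantage_zero] at this
    nlinarith
  have hβ : (b - a) * (M - C) = total f := by rw [sub_mul, hKh, hKψ, total_add hh hf]; ring
  have hβ0 : 0 ≤ b - a := nonneg_of_mul_nonneg_left (hβ ▸ total_nonneg hf) (by linarith)
  refine isUnexploitable_of_advantage_le hf hβ0 fun x hx =>
    advantage_le_of_ae_eq hf hβ0 (by nlinarith) ?_ hx
  filter_upwards [haeh, haeψ] with x hxh hxψ
  by_cases hψx : h x + f x = 0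
  · rw [le_antisymm (by linarith [hh.nonneg x]) (hf.nonneg x), zero_mul]
  · have hDh := (mul_eq_zero.1 hxh).resolve_left hψx
    have hDψ := (mul_eq_zero.1 hxψ).resolve_left hψx
    rw [advantage_add hh hf] at hDψ
    rw [show (b - a) * (x - C) - advantage f x = 0 by linarith, mul_zero]

end TwoPlayer

theorem IsUnexploitable.sum_of_sum_erase {ι : Type*} [Fintype ι] [DecidableEq ι] [Nontrivial ι]
    {C : ℝ} {f : ι → ℝ → ℝ} (hf : ∀ i, IsPrestrategy (f i))
    (hU : ∀ k, IsUnexploitable C fun x => ∑ ℓ ∈ Finset.univ.erase k, f ℓ x) :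
    IsUnexploitable C fun x => ∑ ℓ, f ℓ x := by
  intro g hg hgC
  have hgP := hg.isPrestrategy
  have hsum : ∑ k, ∑ ℓ ∈ Finset.univ.erase k, wp g (f ℓ) ≤ 0 :=
    Finset.sum_nonpos fun k _ => by
      simpa only [wp_finset_sum_right _ (fun i _ => hf i) hgP] using hU k g hg hgC
  simp only [Finset.sum_erase_eq_sub (Finset.mem_univ _), Finset.sum_sub_distrib,
    Finset.sum_const, Finset.card_univ, nsmul_eq_mul] at hsum
  rw [wp_finset_sum_right _ (fun i _ => hf i) hgP]
  have hcard : (1 : ℝ) < Fintype.card ι := by exact_mod_cast Fintype.one_lt_card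
  nlinarith

end BoundedGame

open BoundedGame in
theorem stmt14 (C : ℝ) (hC : 0 < C) (n : ℕ) (hn : 2 ≤ n) (f : Fin n → ℝ → ℝ)
    (hstrat : ∀ k, IsStrategy (f k)) (hadm : ∀ k, mca (f k) ≤ C)
    (heq : ∀ k, ∀ g : ℝ → ℝ, IsStrategy g → mca g ≤ C →
      wp g (fun x => ∑ ℓ ∈ Finset.univ.erase k, f ℓ x) ≤
        wp (f k) (fun x => ∑ ℓ ∈ Finset.univ.erase k, f ℓ x)) :
    (∀ j k, wp (f k) (f j) = 0) ∧
    (∀ k, ∀ g : ℝ → ℝ, IsStrategy g → mca g ≤ C → 0 ≤ wp (f k) g) := by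
  have : Nontrivial (Fin n) := Fin.nontrivial_iff_two_le.2 hn
  have hP k : IsPrestrategy (f k) := (hstrat k).isPrestrategy
  have hPS k := IsPrestrategy.finset_sum (Finset.univ.erase k) fun ℓ _ => hP ℓ
  have hzero : ∀ j k, wp (f j) (f k) = 0 :=
    eq_zero_of_antisymm_of_sum_erase_le (fun j k => wp_antisymm (hP j) (hP k)) fun j k => by
      simpa only [wp_finset_sum_right _ (fun ℓ _ => hP ℓ) (hP _)] using
        heq k (f j) (hstrat j) (hadm j)
  have hwpS j k : wp (f j) (fun x => ∑ ℓ ∈ Finset.univ.erase k, f ℓ x) = 0 := by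
    rw [wp_finset_sum_right _ (fun ℓ _ => hP ℓ) (hP j)]
    exact Finset.sum_eq_zero fun ℓ _ => hzero j ℓ
  have hUS k : IsUnexploitable C fun x => ∑ ℓ ∈ Finset.univ.erase k, f ℓ x :=
    fun g hg hgC => (heq k g hg hgC).trans (hwpS k k).le
  refine ⟨fun j k => hzero k j, fun k g hg hgC => ?_⟩
  have hsum : (fun x => ∑ ℓ ∈ Finset.univ.erase k, f ℓ x) + f k = fun x => ∑ ℓ, f ℓ x := by
    ext x; exact Finset.sum_erase_add _ _ (Finset.mem_univ k)
  have hUf : IsUnexploitable C (f k) := by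
    refine (hUS k).of_add hC (hPS k) (hP k) (hsum ▸ IsUnexploitable.sum_of_sum_erase hP hUS) ?_ ?_ ?_
    all_goals rw [hsum]
    · exact total_finset_sum_pos Finset.univ_nonempty fun ℓ _ => hstrat ℓ
    · exact moment_finset_sum_le_mul_total _ (fun ℓ _ => hstrat ℓ) fun ℓ _ => hadm ℓ
    · rw [wp_finset_sum_left _ (fun ℓ _ => hP ℓ) (hPS k)]
      exact (Finset.sum_eq_zero fun j _ => hwpS j k).ge
  rw [wp_antisymm (hP k) hg.isPrestrategy]
  linarith [hUf g hg hgC]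
end

section
/- Fix a positive integer M, let the constraint value be C = 1/2, and restrict the discrete game to strategies supported in {0, 1, …, M}. If M is odd, then a discrete strategy A with mca(A) ≤ 1/2 satisfies wp(A; B) ≥ 0 for every discrete strategy B supported in {0, …, M} with mca(B) ≤ 1/2 if and only if A is uniform, i.e. there is a > 0 with A(j) = a for all 0 ≤ j ≤ M. If M is even, then A satisfies this condition if and only if mca(A) = 1/2, A(2j) = A(0) and A(2j+1) = A(1) for all j with 0 ≤ 2j ≤ M and 0 ≤ 2j+1 ≤ M. -/
/-!
Write `t_A(i) = wpD A δᵢ`, so that `wpD A B = Σᵢ B(i) t_A(i)`, and note that `mca(B) ≤ 1/2` iff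
`Σᵢ B(i)(M - 2i) ≥ 0`. Testing `A` against admissible strategies with at most two atoms, together
with `Σᵢ t_A(i) = -Σᵢ A(i)(M - 2i) ≤ 0`, forces `t_A(i) = c(M - 2i)` for some `c ≥ 0`; conversely
such an `A` beats every admissible `B`. Since `t_A(i) - t_A(i+1) = A(i) + A(i+1)` and
`t_A(0) + t_A(M) = A(M) - A(0)`, this means that the sums `A(i) + A(i+1)` are constant and
`A(M) = A(0)`: `A` alternates with period two, and for odd `M` the two values coincide.
-/

open Set

/-- A discrete strategy: a nonnegative finitely supported function on `ℕ`
with positive total mass `|A| = Σ_j A(j)`. -/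
def IsDStrategy (A : ℕ → ℝ) : Prop :=
  (∀ j, 0 ≤ A j) ∧ (Function.support A).Finite ∧ 0 < ∑ᶠ j, A j

/-- Mean competitive ability on the grid `{j/M : j ∈ ℕ}`:
`mcaD M A = (Σ_j (j/M) A(j)) / (Σ_j A(j))`. -/
noncomputable def mcaD (M : ℕ) (A : ℕ → ℝ) : ℝ :=
  (∑ᶠ j : ℕ, ((j : ℝ) / M) * A j) / (∑ᶠ j : ℕ, A j)

/-- Discrete payoff `wpD A B = Σ_j A(j) (Σ_{i<j} B(i) − Σ_{i>j} B(i))`. -/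
noncomputable def wpD (A B : ℕ → ℝ) : ℝ :=
  ∑ᶠ j : ℕ, A j * ((∑ᶠ i ∈ Iio j, B i) - ∑ᶠ i ∈ Ioi j, B i)

namespace DiscreteGame

variable {M : ℕ} {A B : ℕ → ℝ}

/-- Let `c` be the least ratio `t i / w i` over `w i > 0`: two-point tests give `c * w ≤ t` on `s`,
and the sum conditions force equality. -/
lemma exists_nonneg_eq_mul_of_two_point_nonneg {ι : Type*} (s : Finset ι) (w t : ι → ℝ)
    (hw : 0 ≤ ∑ i ∈ s, w i) (ht : ∑ i ∈ s, t i ≤ 0) (hpos : ∃ i ∈ s, 0 < w i)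
    (H : ∀ i ∈ s, ∀ k ∈ s, ∀ a b : ℝ, 0 ≤ a → 0 ≤ b → 0 < a + b →
      0 ≤ a * w i + b * w k → 0 ≤ a * t i + b * t k) :
    ∃ c, 0 ≤ c ∧ ∀ i ∈ s, t i = c * w i := by
  have hpoint : ∀ i ∈ s, 0 ≤ w i → 0 ≤ t i := fun i hi hwi => by
    simpa using H i hi i hi 1 0 zero_le_one le_rfl (by norm_num) (by simpa using hwi)
  obtain ⟨i₀, hi₀, hmin⟩ := (s.filter (0 < w ·)).exists_min_image (fun i => t i / w i)
    (by obtain ⟨i, hi, hwi⟩ := hpos; exact ⟨i, Finset.mem_filter.mpr ⟨hi, hwi⟩⟩)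
  obtain ⟨hi₀s, hw₀⟩ := Finset.mem_filter.mp hi₀
  set c := t i₀ / w i₀
  have hc : 0 ≤ c := div_nonneg (hpoint i₀ hi₀s hw₀.le) hw₀.le
  have hle : ∀ k ∈ s, c * w k ≤ t k := by
    intro k hk
    rcases lt_trichotomy (w k) 0 with hneg | hzero | hposk
    · have := H i₀ hi₀s k hk (-w k) (w i₀) (by linarith) hw₀.le (by linarith)
        (le_of_eq (by ring))
      rw [div_mul_eq_mul_div, div_le_iff₀ hw₀]
      linarith
    · rw [hzero, mul_zero]
      exact hpoint k hk hzero.ge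
    · exact (le_div_iff₀ hposk).mp (hmin k (Finset.mem_filter.mpr ⟨hk, hposk⟩))
  have hgap : ∀ k ∈ s, 0 ≤ t k - c * w k := fun k hk => sub_nonneg.mpr (hle k hk)
  have hsum : ∑ k ∈ s, (t k - c * w k) = 0 := by
    refine le_antisymm ?_ (Finset.sum_nonneg hgap)
    rw [Finset.sum_sub_distrib, ← Finset.mul_sum]
    nlinarith
  refine ⟨c, hc, fun k hk => ?_⟩
  linarith [(Finset.sum_eq_zero_iff_of_nonneg hgap).mp hsum k hk]

lemma finsum_eq_sum_range {f : ℕ → ℝ} (hf : ∀ j, M < j → f j = 0) :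
    ∑ᶠ j, f j = ∑ j ∈ Finset.range (M + 1), f j := by
  refine finsum_eq_sum_of_support_subset f fun j hj => ?_
  simp only [Finset.coe_range, Set.mem_Iio]
  by_contra h
  exact hj (hf j (by omega))

lemma finsum_mem_Ioi_eq_sum_Ioc (hB : ∀ j, M < j → B j = 0) (j : ℕ) :
    ∑ᶠ i ∈ Ioi j, B i = ∑ i ∈ Finset.Ioc j M, B i := by
  refine finsum_mem_eq_sum_of_subset B (fun i ⟨hji, hi⟩ => ?_) fun i hi => ?_
  · simp only [Finset.coe_Ioc, mem_Ioc]
    exact ⟨hji, not_lt.mp fun h => hi (hB i h)⟩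
  · exact (Finset.mem_Ioc.mp hi).1

lemma _root_.IsDStrategy.sum_range_pos (hB : IsDStrategy B) (hBs : ∀ j, M < j → B j = 0) :
    0 < ∑ j ∈ Finset.range (M + 1), B j :=
  finsum_eq_sum_range hBs ▸ hB.2.2

lemma isDStrategy_of_sum_range_pos (hB : ∀ j, 0 ≤ B j) (hBs : ∀ j, M < j → B j = 0)
    (hpos : 0 < ∑ j ∈ Finset.range (M + 1), B j) : IsDStrategy B := by
  refine ⟨hB, (finite_Iic M).subset fun j hj => ?_, finsum_eq_sum_range hBs ▸ hpos⟩
  exact not_lt.mp fun h => hj (hBs j h)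

/-- The payoff `wpD A δᵢ` against the point mass at `i`, for `A` supported in `[0, M]`. -/
noncomputable def pointPayoff (M : ℕ) (A : ℕ → ℝ) (i : ℕ) : ℝ :=
  ∑ j ∈ Finset.Ioc i M, A j - ∑ j ∈ Finset.range i, A j

lemma sum_mul_sub_eq_sum_mul_pointPayoff (A B : ℕ → ℝ) :
    ∑ j ∈ Finset.range (M + 1),
        A j * (∑ i ∈ Finset.range j, B i - ∑ i ∈ Finset.Ioc j M, B i) =
      ∑ i ∈ Finset.range (M + 1), B i * pointPayoff M A i := by
  simp only [pointPayoff, mul_sub, Finset.mul_sum, Finset.sum_sub_distrib]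
  congr 1
  · rw [Finset.sum_comm' (t' := Finset.range (M + 1)) (s' := fun i => Finset.Ioc i M)]
    · simp only [mul_comm]
    · intro j i
      simp only [Finset.mem_range, Finset.mem_Ioc]
      omega
  · rw [Finset.sum_comm' (t' := Finset.range (M + 1)) (s' := Finset.range)]
    · simp only [mul_comm]
    · intro j i
      simp only [Finset.mem_range, Finset.mem_Ioc]
      omega

lemma wpD_eq_sum_mul_pointPayoff (hA : ∀ j, M < j → A j = 0) (hB : ∀ j, M < j → B j = 0) :
    wpD A B = ∑ i ∈ Finset.range (M + 1), B i * pointPayoff M A i := by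
  rw [wpD, finsum_eq_sum_range fun j hj => by rw [hA j hj, zero_mul],
    ← sum_mul_sub_eq_sum_mul_pointPayoff]
  simp only [← Finset.coe_range, finsum_mem_coe_finset, finsum_mem_Ioi_eq_sum_Ioc hB]

noncomputable def balance (M : ℕ) (B : ℕ → ℝ) : ℝ :=
  ∑ j ∈ Finset.range (M + 1), B j * ((M : ℝ) - 2 * j)

lemma balance_eq_mul_one_sub_mcaD (hM : 0 < M) (hBs : ∀ j, M < j → B j = 0)
    (hB : ∑ j ∈ Finset.range (M + 1), B j ≠ 0) :
    balance M B = M * (∑ j ∈ Finset.range (M + 1), B j) * (1 - 2 * mcaD M B) := by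
  have hM' : (M : ℝ) ≠ 0 := by positivity
  have hbal : balance M B = M * ∑ j ∈ Finset.range (M + 1), B j -
      2 * ∑ j ∈ Finset.range (M + 1), (j : ℝ) * B j := by
    rw [balance, Finset.mul_sum, Finset.mul_sum, ← Finset.sum_sub_distrib]
    exact Finset.sum_congr rfl fun _ _ => by ring
  have hmoment : ∑ j ∈ Finset.range (M + 1), (j : ℝ) / M * B j =
      (∑ j ∈ Finset.range (M + 1), (j : ℝ) * B j) / M := by
    rw [Finset.sum_div]
    exact Finset.sum_congr rfl fun _ _ => by ring
  rw [mcaD, finsum_eq_sum_range hBs, finsum_eq_sum_range fun j hj => by rw [hBs j hj, mul_zero],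
    hbal, hmoment]
  field_simp

lemma mcaD_le_half_iff (hM : 0 < M) (hB : IsDStrategy B) (hBs : ∀ j, M < j → B j = 0) :
    mcaD M B ≤ 1 / 2 ↔ 0 ≤ balance M B := by
  have hpos := hB.sum_range_pos hBs
  rw [balance_eq_mul_one_sub_mcaD hM hBs hpos.ne', mul_nonneg_iff_of_pos_left (by positivity)]
  constructor <;> intro h <;> linarith

lemma mcaD_eq_half_iff (hM : 0 < M) (hB : IsDStrategy B) (hBs : ∀ j, M < j → B j = 0) :
    mcaD M B = 1 / 2 ↔ balance M B = 0 := by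
  have hpos := hB.sum_range_pos hBs
  rw [balance_eq_mul_one_sub_mcaD hM hBs hpos.ne', mul_eq_zero_iff_left (by positivity)]
  constructor <;> intro h <;> linarith

lemma sum_range_sub_two_mul (M : ℕ) : ∑ j ∈ Finset.range (M + 1), ((M : ℝ) - 2 * j) = 0 := by
  have h := Finset.sum_range_id_mul_two (M + 1)
  rw [Finset.sum_sub_distrib, ← Finset.mul_sum]
  simp only [Finset.sum_const, Finset.card_range, nsmul_eq_mul]
  rify at h
  push_cast at h ⊢
  linarith

lemma sum_pointPayoff (A : ℕ → ℝ) :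
    ∑ i ∈ Finset.range (M + 1), pointPayoff M A i = -balance M A := by
  have h := sum_mul_sub_eq_sum_mul_pointPayoff (M := M) A 1
  simp only [Pi.one_apply, one_mul, Finset.sum_const, Finset.card_range, Nat.card_Ioc,
    nsmul_eq_mul, mul_one] at h
  rw [← h, balance, ← Finset.sum_neg_distrib]
  refine Finset.sum_congr rfl fun j hj => ?_
  rw [Nat.cast_sub (by simpa [Nat.lt_succ_iff] using hj)]
  ring

lemma pointPayoff_sub_pointPayoff_succ {i : ℕ} (hi : i < M) :
    pointPayoff M A i - pointPayoff M A (i + 1) = A i + A (i + 1) := by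
  rw [pointPayoff, pointPayoff, ← Finset.sum_Ioc_consecutive A (Nat.le_succ i) hi,
    Nat.Ioc_succ_singleton, Finset.sum_singleton, Finset.sum_range_succ]
  ring

lemma pointPayoff_zero_add_pointPayoff_self :
    pointPayoff M A 0 + pointPayoff M A M = A M - A 0 := by
  have h : ∑ j ∈ Finset.range (M + 1), A j = A 0 + ∑ j ∈ Finset.Ioc 0 M, A j := by
    rw [Finset.range_eq_Ico, Finset.sum_eq_sum_Ico_succ_bot M.succ_pos,
      ← Finset.Ico_add_one_add_one_eq_Ioc]
    rfl
  rw [pointPayoff, pointPayoff, Finset.Ioc_self, Finset.sum_empty, Finset.range_zero,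
    Finset.sum_empty, ← sub_eq_of_eq_add' h, Finset.sum_range_succ]
  ring

lemma pointPayoff_eq_of_add_succ_eq {c : ℝ} (h : ∀ i < M, A i + A (i + 1) = 2 * c) :
    ∀ i ≤ M, pointPayoff M A i = pointPayoff M A 0 - 2 * c * i := by
  intro i hi
  induction i with
  | zero => simp
  | succ i ih =>
    have := pointPayoff_sub_pointPayoff_succ (A := A) hi
    rw [h i hi, ih (by omega)] at this
    push_cast
    linarith

lemma pointPayoff_eq_mul_iff {c : ℝ} :
    (∀ i ≤ M, pointPayoff M A i = c * (M - 2 * i)) ↔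
      (∀ i < M, A i + A (i + 1) = 2 * c) ∧ A M = A 0 := by
  have hends := pointPayoff_zero_add_pointPayoff_self (M := M) (A := A)
  constructor
  · intro ht
    refine ⟨fun i hi => ?_, ?_⟩
    · rw [← pointPayoff_sub_pointPayoff_succ hi, ht i hi.le, ht (i + 1) hi]
      push_cast
      ring
    · rw [ht 0 M.zero_le, ht M le_rfl] at hends
      push_cast at hends
      linarith
  · rintro ⟨hstep, hlast⟩ i hi
    have ht := pointPayoff_eq_of_add_succ_eq hstep
    rw [ht M le_rfl, hlast] at hends
    rw [ht i hi]
    linarith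

def IsOptimal (M : ℕ) (A : ℕ → ℝ) : Prop :=
  ∀ B : ℕ → ℝ, IsDStrategy B → (∀ j, M < j → B j = 0) → mcaD M B ≤ 1 / 2 → 0 ≤ wpD A B

lemma sum_range_single_add_single_mul {i k : ℕ} (hi : i ≤ M) (hk : k ≤ M) (a b : ℝ)
    (f : ℕ → ℝ) :
    ∑ j ∈ Finset.range (M + 1), (Pi.single i a + Pi.single k b : ℕ → ℝ) j * f j =
      a * f i + b * f k := by
  simp [add_mul, Finset.sum_add_distrib, Pi.single_apply, ite_mul, hi, hk]

lemma IsOptimal.two_point (hM : 0 < M) (hAs : ∀ j, M < j → A j = 0) (hopt : IsOptimal M A)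
    {i k : ℕ} (hi : i ≤ M) (hk : k ≤ M) {a b : ℝ} (ha : 0 ≤ a) (hb : 0 ≤ b) (hab : 0 < a + b)
    (hbal : 0 ≤ a * ((M : ℝ) - 2 * i) + b * ((M : ℝ) - 2 * k)) :
    0 ≤ a * pointPayoff M A i + b * pointPayoff M A k := by
  set B : ℕ → ℝ := Pi.single i a + Pi.single k b
  have hBs : ∀ j, M < j → B j = 0 := fun j hj => by
    simp only [B, Pi.add_apply, Pi.single_apply, if_neg (show j ≠ i by omega),
      if_neg (show j ≠ k by omega), add_zero]
  have hmass : ∑ j ∈ Finset.range (M + 1), B j = a + b := by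
    simpa [B] using sum_range_single_add_single_mul hi hk a b 1
  have hBnn : 0 ≤ B := add_nonneg (Pi.single_nonneg.mpr ha) (Pi.single_nonneg.mpr hb)
  have hB : IsDStrategy B := isDStrategy_of_sum_range_pos hBnn hBs (hmass ▸ hab)
  have := hopt B hB hBs ((mcaD_le_half_iff hM hB hBs).mpr
    (by rwa [balance, sum_range_single_add_single_mul hi hk]))
  rwa [wpD_eq_sum_mul_pointPayoff hAs hBs, sum_range_single_add_single_mul hi hk] at this

lemma IsOptimal.exists_pointPayoff_eq (hM : 0 < M) (hA : IsDStrategy A)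
    (hAs : ∀ j, M < j → A j = 0) (hAC : mcaD M A ≤ 1 / 2) (hopt : IsOptimal M A) :
    ∃ c, 0 ≤ c ∧ ∀ i ≤ M, pointPayoff M A i = c * (M - 2 * i) := by
  simp only [← Nat.lt_succ_iff, ← Finset.mem_range]
  refine exists_nonneg_eq_mul_of_two_point_nonneg _ _ _ (sum_range_sub_two_mul M).ge ?_
    ⟨0, by simp, by simpa using hM⟩ fun i hi k hk a b ha hb hab hbal => ?_
  · rw [sum_pointPayoff, neg_nonpos]
    exact (mcaD_le_half_iff hM hA hAs).mp hAC
  · rw [Finset.mem_range, Nat.lt_succ_iff] at hi hk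
    exact hopt.two_point hM hAs hi hk ha hb hab hbal

lemma isOptimal_of_pointPayoff_eq (hM : 0 < M) (hAs : ∀ j, M < j → A j = 0) {c : ℝ}
    (hc : 0 ≤ c) (ht : ∀ i ≤ M, pointPayoff M A i = c * (M - 2 * i)) : IsOptimal M A := by
  intro B hB hBs hBC
  have hsum : wpD A B = c * balance M B := by
    rw [wpD_eq_sum_mul_pointPayoff hAs hBs, balance, Finset.mul_sum]
    refine Finset.sum_congr rfl fun i hi => ?_
    rw [ht i (Nat.lt_succ_iff.mp (Finset.mem_range.mp hi))]
    ring
  rw [hsum]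
  exact mul_nonneg hc ((mcaD_le_half_iff hM hB hBs).mp hBC)

lemma alternating_of_add_succ_eq {s : ℝ} (h : ∀ i < M, A i + A (i + 1) = s) :
    (∀ j, 2 * j ≤ M → A (2 * j) = A 0) ∧ (∀ j, 2 * j + 1 ≤ M → A (2 * j + 1) = A 1) := by
  have hper : ∀ i, i + 2 ≤ M → A (i + 2) = A i := fun i hi => by
    linarith [h i (by omega), h (i + 1) (by omega)]
  constructor
  · intro j hj
    induction j with
    | zero => rfl
    | succ j ih => rw [mul_add, mul_one, hper (2 * j) (by omega), ih (by omega)]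
  · intro j hj
    induction j with
    | zero => rfl
    | succ j ih => rw [show 2 * (j + 1) + 1 = 2 * j + 1 + 2 by ring, hper _ (by omega), ih (by omega)]

lemma add_succ_eq_of_alternating (he : ∀ j, 2 * j ≤ M → A (2 * j) = A 0)
    (ho : ∀ j, 2 * j + 1 ≤ M → A (2 * j + 1) = A 1) :
    ∀ i < M, A i + A (i + 1) = A 0 + A 1 := by
  intro i hi
  obtain ⟨j, rfl | rfl⟩ := Nat.even_or_odd' i
  · rw [he j (by omega), ho j (by omega)]
  · rw [ho j (by omega), show 2 * j + 1 + 1 = 2 * (j + 1) by ring, he (j + 1) (by omega),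
      add_comm]

lemma isOptimal_iff_of_odd (hodd : Odd M) (hA : IsDStrategy A) (hAs : ∀ j, M < j → A j = 0)
    (hAC : mcaD M A ≤ 1 / 2) :
    IsOptimal M A ↔ ∃ a : ℝ, 0 < a ∧ ∀ j ≤ M, A j = a := by
  have hM := hodd.pos
  constructor
  · intro hopt
    obtain ⟨c, -, ht⟩ := hopt.exists_pointPayoff_eq hM hA hAs hAC
    obtain ⟨hstep, hends⟩ := pointPayoff_eq_mul_iff.mp ht
    obtain ⟨he, ho⟩ := alternating_of_add_succ_eq hstep
    obtain ⟨m, rfl⟩ := hodd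
    have hconst : ∀ j ≤ 2 * m + 1, A j = A 0 := fun j hj => by
      obtain ⟨k, rfl | rfl⟩ := Nat.even_or_odd' j
      · exact he k hj
      · rw [ho k hj, ← ho m le_rfl, hends]
    have hmass := hA.sum_range_pos hAs
    rw [Finset.sum_congr rfl fun j hj => hconst j (Nat.lt_succ_iff.mp (Finset.mem_range.mp hj)),
      Finset.sum_const, nsmul_eq_mul] at hmass
    exact ⟨A 0, pos_of_mul_pos_right hmass (by positivity), hconst⟩
  · rintro ⟨a, ha, hconst⟩
    refine isOptimal_of_pointPayoff_eq hM hAs ha.le (pointPayoff_eq_mul_iff.mpr ⟨?_, ?_⟩)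
    · intro i hi
      rw [hconst i hi.le, hconst (i + 1) hi]
      ring
    · rw [hconst M le_rfl, hconst 0 M.zero_le]

lemma isOptimal_iff_of_even (hM : 0 < M) (heven : Even M) (hA : IsDStrategy A)
    (hAs : ∀ j, M < j → A j = 0) (hAC : mcaD M A ≤ 1 / 2) :
    IsOptimal M A ↔ mcaD M A = 1 / 2 ∧ (∀ j, 2 * j ≤ M → A (2 * j) = A 0) ∧
      (∀ j, 2 * j + 1 ≤ M → A (2 * j + 1) = A 1) := by
  constructor
  · intro hopt
    obtain ⟨c, -, ht⟩ := hopt.exists_pointPayoff_eq hM hA hAs hAC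
    refine ⟨(mcaD_eq_half_iff hM hA hAs).mpr ?_,
      alternating_of_add_succ_eq (pointPayoff_eq_mul_iff.mp ht).1⟩
    rw [← neg_eq_zero, ← sum_pointPayoff,
      Finset.sum_congr rfl fun i hi => ht i (Nat.lt_succ_iff.mp (Finset.mem_range.mp hi)),
      ← Finset.mul_sum, sum_range_sub_two_mul, mul_zero]
  · rintro ⟨-, he, ho⟩
    obtain ⟨m, rfl⟩ := heven
    have hc : 0 ≤ (A 0 + A 1) / 2 := by linarith [hA.1 0, hA.1 1]
    refine isOptimal_of_pointPayoff_eq hM hAs hc (pointPayoff_eq_mul_iff.mpr ⟨?_, ?_⟩)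
    · intro i hi
      rw [add_succ_eq_of_alternating he ho i hi]
      ring
    · simpa [two_mul] using he m (by omega)

end DiscreteGame

open DiscreteGame in
theorem stmt15 (M : ℕ) (hM : 0 < M) (A : ℕ → ℝ) (hA : IsDStrategy A)
    (hAsupp : ∀ j, M < j → A j = 0) (hAC : mcaD M A ≤ 1/2) :
    (Odd M →
      ((∀ B : ℕ → ℝ, IsDStrategy B → (∀ j, M < j → B j = 0) → mcaD M B ≤ 1/2 →
          0 ≤ wpD A B) ↔
        ∃ a : ℝ, 0 < a ∧ ∀ j ≤ M, A j = a)) ∧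
    (Even M →
      ((∀ B : ℕ → ℝ, IsDStrategy B → (∀ j, M < j → B j = 0) → mcaD M B ≤ 1/2 →
          0 ≤ wpD A B) ↔
        (mcaD M A = 1/2 ∧ (∀ j : ℕ, 2*j ≤ M → A (2*j) = A 0) ∧
          (∀ j : ℕ, 2*j+1 ≤ M → A (2*j+1) = A 1)))) :=
  ⟨fun hodd => isOptimal_iff_of_odd hodd hA hAsupp hAC,
    fun heven => isOptimal_iff_of_even hM heven hA hAsupp hAC⟩
end

section
/- Fix positive integers M and j_C with 2j_C < M, and let the constraint value be C = j_C/M. Define the discrete strategy A by A(k) = 1 for 0 ≤ k ≤ 2j_C and A(k) = 0 for k > 2j_C, so that mca(A) = C. Then for every discrete strategy B supported in {0, …, M} with mca(B) ≤ C, one has wp(A; B) ≥ Σ_{k=2j_C+1}^{M} (2k − 4j_C − 1) B(k) ≥ 0; in particular wp(A; B) > 0 whenever B(k) > 0 for some k > 2j_C. -/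
open Set

open Finset

/-!
Against the uniform strategy `A` on `{0, …, n}` (`n = 2 j_C`), a unit of mass placed by `B` at `i`
earns `n - 2i` when `i ≤ n` and `-(n+1)` when `i > n`. Hence `wp(A; B)` equals the tail sum
`Σ_{k > n} (2k - 2n - 1) B(k)` plus `Σ_i (n - 2i) B(i) = 2 (j_C |B| - Σ_i i B(i))`, and the constraint
`mca(B) ≤ j_C / M` says exactly that this last quantity is nonnegative.
-/

section FiniteSupport

variable {α : Type*} [AddCommMonoid α] {f : ℕ → α} {N : ℕ}

lemma support_subset_range_of_eq_zero (hf : ∀ j, N < j → f j = 0) :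
    Function.support f ⊆ ↑(range (N + 1)) := by
  intro j hj
  by_contra hjN
  exact hj (hf j (by simpa using hjN))

lemma finsum_eq_sum_range_of_eq_zero (hf : ∀ j, N < j → f j = 0) :
    ∑ᶠ j, f j = ∑ j ∈ range (N + 1), f j :=
  finsum_eq_sum_of_support_subset f (support_subset_range_of_eq_zero hf)

lemma finsum_mem_eq_sum_range_indicator (hf : ∀ j, N < j → f j = 0) (t : Set ℕ) :
    ∑ᶠ j ∈ t, f j = ∑ j ∈ range (N + 1), t.indicator f j := by
  rw [finsum_mem_def]
  exact finsum_eq_sum_range_of_eq_zero fun j hj => by simp [hf j hj]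

end FiniteSupport

lemma sum_range_succ_cast_id (n : ℕ) : ∑ j ∈ range (n + 1), (j : ℝ) = n * (n + 1) / 2 := by
  induction n with
  | zero => simp
  | succ n ih => rw [sum_range_succ, ih]; push_cast; ring

lemma sum_range_sign_eq (n i : ℕ) :
    ∑ j ∈ range (n + 1), (((if i < j then 1 else 0) - if j < i then 1 else 0) : ℝ) =
      (n - 2 * i) + if n < i then (2 * i - 2 * n - 1 : ℝ) else 0 := by
  induction n with
  | zero =>
    rw [sum_range_one]
    rcases Nat.eq_zero_or_pos i with rfl | hi
    · simp
    · simp only [Nat.not_lt_zero, if_false, if_pos hi]; push_cast; ring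
  | succ n ih =>
    rw [sum_range_succ, ih]
    rcases lt_trichotomy i (n + 1) with hi | rfl | hi
    · rw [if_neg (by omega), if_pos hi, if_neg (by omega), if_neg (by omega)]; push_cast; ring
    · simp; ring
    · rw [if_pos (by omega), if_neg (by omega), if_pos (by omega), if_pos hi]; push_cast; ring

lemma two_mul_sub_two_mul_sub_one_pos {n k : ℕ} (hk : n < k) : 0 < 2 * (k : ℝ) - 2 * n - 1 := by
  have : (n : ℝ) + 1 ≤ k := by exact_mod_cast hk
  linarith

section Strategies

variable {A B : ℕ → ℝ} {n N : ℕ}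

lemma wpD_eq_sum_range (hA : ∀ j, n < j → A j = 0) (hB : ∀ j, N < j → B j = 0) :
    wpD A B = ∑ i ∈ range (N + 1),
      (∑ j ∈ range (n + 1), A j * ((if i < j then 1 else 0) - if j < i then 1 else 0)) * B i := by
  have hrow : ∀ j, A j * ((∑ᶠ i ∈ Set.Iio j, B i) - ∑ᶠ i ∈ Set.Ioi j, B i) = ∑ i ∈ range (N + 1),
      A j * ((if i < j then 1 else 0) - if j < i then 1 else 0) * B i := by
    intro j
    rw [finsum_mem_eq_sum_range_indicator hB, finsum_mem_eq_sum_range_indicator hB,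
      ← sum_sub_distrib, mul_sum]
    refine sum_congr rfl fun i _ => ?_
    simp only [indicator_apply, Set.mem_Iio, Set.mem_Ioi]
    split_ifs <;> ring
  rw [wpD, finsum_eq_sum_range_of_eq_zero (N := n) fun j hj => by simp [hA j hj]]
  simp only [hrow]
  rw [sum_comm]
  simp only [sum_mul]

lemma mcaD_eq_sum_range (M : ℕ) (hB : ∀ j, N < j → B j = 0) :
    mcaD M B = (∑ j ∈ range (N + 1), (j : ℝ) * B j) / (M * ∑ j ∈ range (N + 1), B j) := by
  rw [mcaD, finsum_eq_sum_range_of_eq_zero hB,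
    finsum_eq_sum_range_of_eq_zero (N := N) fun j hj => by simp [hB j hj]]
  simp only [div_mul_eq_mul_div, ← sum_div, div_div]

lemma sum_range_mul_le_of_mcaD_le {M : ℕ} {c : ℝ} (hM : 0 < M) (hB : ∀ j, N < j → B j = 0)
    (hmass : 0 < ∑ᶠ j, B j) (hmca : mcaD M B ≤ c / M) :
    ∑ j ∈ range (N + 1), (j : ℝ) * B j ≤ c * ∑ j ∈ range (N + 1), B j := by
  rw [finsum_eq_sum_range_of_eq_zero hB] at hmass
  have hM' : (0 : ℝ) < M := by exact_mod_cast hM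
  rw [mcaD_eq_sum_range M hB, div_le_div_iff₀ (by positivity) hM'] at hmca
  nlinarith

lemma mcaD_uniform (M n : ℕ) :
    mcaD M (fun k => if k ≤ n then (1 : ℝ) else 0) = n / (2 * M) := by
  have hle : ∀ j ∈ range (n + 1), j ≤ n := fun j hj => Nat.lt_succ_iff.1 (mem_range.1 hj)
  rw [mcaD_eq_sum_range (N := n) M fun j hj => if_neg (by omega)]
  simp only [mul_ite, mul_one, mul_zero]
  rw [sum_ite_of_true hle, sum_ite_of_true hle, sum_range_succ_cast_id, sum_const, card_range,
    nsmul_one, mul_comm (M : ℝ), show (n : ℝ) * (n + 1) / 2 = (n + 1) * (n / 2) by ring,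
    Nat.cast_add_one, mul_div_mul_left _ _ (by positivity), div_div]

lemma wpD_uniform_eq (hB : ∀ j, N < j → B j = 0) :
    wpD (fun k => if k ≤ n then (1 : ℝ) else 0) B =
      n * ∑ i ∈ range (N + 1), B i - 2 * ∑ i ∈ range (N + 1), (i : ℝ) * B i +
        ∑ k ∈ Finset.Icc (n + 1) N, (2 * (k : ℝ) - 2 * n - 1) * B k := by
  have hle : ∀ j ∈ range (n + 1), j ≤ n := fun j hj => Nat.lt_succ_iff.1 (mem_range.1 hj)
  have htail : Finset.Icc (n + 1) N = (range (N + 1)).filter (n < ·) := by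
    ext k
    simp only [Finset.mem_Icc, mem_filter, Finset.mem_range]
    omega
  rw [wpD_eq_sum_range (n := n) (fun j hj => if_neg (by omega)) hB]
  simp only [ite_mul, one_mul, zero_mul]
  simp only [sum_ite_of_true hle, sum_range_sign_eq]
  simp only [add_mul, sum_add_distrib, ite_mul, zero_mul, ← sum_filter, ← htail,
    sub_mul, sum_sub_distrib, mul_sum, mul_assoc]

lemma sum_Icc_tail_nonneg (n N : ℕ) (hB : ∀ k, 0 ≤ B k) :
    0 ≤ ∑ k ∈ Finset.Icc (n + 1) N, (2 * (k : ℝ) - 2 * n - 1) * B k :=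
  sum_nonneg fun k hk =>
    mul_nonneg (two_mul_sub_two_mul_sub_one_pos (Finset.mem_Icc.1 hk).1).le (hB k)

lemma sum_Icc_tail_pos {k : ℕ} (hB : ∀ k, 0 ≤ B k) (hk : k ∈ Finset.Icc (n + 1) N)
    (hBk : 0 < B k) : 0 < ∑ k ∈ Finset.Icc (n + 1) N, (2 * (k : ℝ) - 2 * n - 1) * B k :=
  sum_pos' (fun k hk =>
      mul_nonneg (two_mul_sub_two_mul_sub_one_pos (Finset.mem_Icc.1 hk).1).le (hB k))
    ⟨k, hk, mul_pos (two_mul_sub_two_mul_sub_one_pos (Finset.mem_Icc.1 hk).1) hBk⟩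

end Strategies

theorem stmt16_general (M jC : ℕ) (hM : 0 < M)
    (C : ℝ) (hC : C = (jC : ℝ) / M)
    (A : ℕ → ℝ) (hA : A = fun k => if k ≤ 2*jC then (1:ℝ) else 0) :
    mcaD M A = C ∧
    ∀ B : ℕ → ℝ, IsDStrategy B → (∀ j, M < j → B j = 0) → mcaD M B ≤ C →
      ((∑ k ∈ Finset.Icc (2*jC+1) M, (2*(k:ℝ) - 4*(jC:ℝ) - 1) * B k) ≤ wpD A B ∧
       0 ≤ ∑ k ∈ Finset.Icc (2*jC+1) M, (2*(k:ℝ) - 4*(jC:ℝ) - 1) * B k ∧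
       ((∃ k, 2*jC < k ∧ 0 < B k) → 0 < wpD A B)) := by
  subst hC hA
  refine ⟨by rw [mcaD_uniform]; push_cast; rw [mul_div_mul_left _ _ two_ne_zero], ?_⟩
  rintro B ⟨hB0, -, hmass⟩ hBM hmca
  have hmean := sum_range_mul_le_of_mcaD_le hM hBM hmass hmca
  have hwp := wpD_uniform_eq (n := 2 * jC) hBM
  have htail := sum_Icc_tail_nonneg (2 * jC) M hB0
  push_cast at hwp htail
  have hcoef : ∀ k : ℕ, 2 * (k : ℝ) - 4 * jC - 1 = 2 * k - 2 * (2 * jC) - 1 := fun k => by ring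
  simp only [hcoef]
  refine ⟨by linarith, htail, ?_⟩
  rintro ⟨k, hk, hBk⟩
  have hkM : k ≤ M := by
    by_contra hMk
    exact hBk.ne' (hBM k (by omega))
  have htail_pos := sum_Icc_tail_pos hB0 (Finset.mem_Icc.2 ⟨hk, hkM⟩) hBk
  push_cast at htail_pos
  linarith

theorem stmt16 (M jC : ℕ) (hM : 0 < M) (hjC : 0 < jC) (hlt : 2*jC < M)
    (C : ℝ) (hC : C = (jC : ℝ) / M)
    (A : ℕ → ℝ) (hA : A = fun k => if k ≤ 2*jC then (1:ℝ) else 0) :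
    mcaD M A = C ∧
    ∀ B : ℕ → ℝ, IsDStrategy B → (∀ j, M < j → B j = 0) → mcaD M B ≤ C →
      ((∑ k ∈ Finset.Icc (2*jC+1) M, (2*(k:ℝ) - 4*(jC:ℝ) - 1) * B k) ≤ wpD A B ∧
       0 ≤ ∑ k ∈ Finset.Icc (2*jC+1) M, (2*(k:ℝ) - 4*(jC:ℝ) - 1) * B k ∧
       ((∃ k, 2*jC < k ∧ 0 < B k) → 0 < wpD A B)) :=
  stmt16_general M jC hM C hC A hA
end

section
/- Fix a positive integer M and a nonnegative integer j_C with 2j_C + 1 < M, and let the constraint value be C = (2j_C + 1)/(2M). Define the discrete strategy A by A(k) = 1 for 0 ≤ k ≤ 2j_C + 1 and A(k) = 0 for k > 2j_C + 1, so that mca(A) = C. Then for every discrete strategy B supported in {0, …, M} with mca(B) ≤ C, one has wp(A; B) ≥ Σ_{k=2j_C+2}^{M} (2k − 3 − 4j_C) B(k) ≥ 0; in particular wp(A; B) > 0 whenever B(k) > 0 for some k ≥ 2j_C + 2. -/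
/-!
Write `N = 2 j_C + 1`. Against the block strategy `A = 1` on `{0, …, N}`, a pure strategy `i`
scores `#{j ≤ N | i < j} - #{j ≤ N | j < i}`, which is `N - 2i` for `i ≤ N` and
`-(N + 1) = (N - 2i) + (2i - 2N - 1)` for `i > N`. Hence
`wp(A; B) = Σ (N - 2i) B(i) + Σ_{i > N} (2i - 2N - 1) B(i)`, and the first sum equals
`|B| (N - 2M mca(B))`, which is nonnegative exactly under the constraint `mca(B) ≤ N / (2M)`.
-/

open Set

open Finset Function

theorem finsum_mem_eq_sum_filter_of_support_subset {α M : Type*} [AddCommMonoid M] {f : α → M}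
    {t : Finset α} (hf : support f ⊆ t) (s : Set α) [DecidablePred (· ∈ s)] :
    ∑ᶠ i ∈ s, f i = ∑ i ∈ t with i ∈ s, f i :=
  finsum_mem_eq_sum_of_inter_support_eq f <| by
    ext x
    simp only [Set.mem_inter_iff, coe_filter, Set.mem_ofPred_eq, mem_support]
    exact ⟨fun ⟨hs, hx⟩ => ⟨⟨hf hx, hs⟩, hx⟩, fun ⟨⟨_, hs⟩, hx⟩ => ⟨hs, hx⟩⟩

theorem wpD_eq_sum_mul_sum {A B : ℕ → ℝ} {s t : Finset ℕ} (hA : support A ⊆ s)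
    (hB : support B ⊆ t) :
    wpD A B = ∑ i ∈ t, B i *
      ∑ j ∈ s, A j * ((if i < j then 1 else 0) - (if j < i then 1 else 0)) := by
  rw [wpD, finsum_eq_sum_of_support_subset _ ((support_mul_subset_left _ _).trans hA)]
  simp_rw [finsum_mem_eq_sum_filter_of_support_subset hB, sum_filter, ← sum_sub_distrib,
    mul_sum]
  rw [sum_comm]
  refine sum_congr rfl fun i _ => sum_congr rfl fun j _ => ?_
  simp only [Set.mem_Iio, Set.mem_Ioi]
  split_ifs <;> ring

theorem support_ite_le_subset (N : ℕ) :
    support (fun k : ℕ => if k ≤ N then (1 : ℝ) else 0) ⊆ Finset.Iic N := by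
  intro k hk
  by_contra h
  simp_all

theorem sum_Iic_ite_lt_sub_ite_gt (N i : ℕ) :
    ∑ j ∈ Finset.Iic N, ((if i < j then 1 else 0) - (if j < i then 1 else 0) : ℝ) =
      N - 2 * i + if N < i then 2 * (i : ℝ) - 2 * N - 1 else 0 := by
  rw [← Nat.range_succ_eq_Iic]
  induction N with
  | zero =>
    rw [zero_add, sum_range_one]
    rcases i.eq_zero_or_pos with rfl | hi
    · simp
    · simp [hi]
      ring
  | succ N ih =>
    rw [sum_range_succ, ih]
    rcases lt_trichotomy i (N + 1) with h | rfl | h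
    · simp [h, h.not_gt, Nat.lt_succ_iff.1 h |>.not_gt]
      ring
    · simp
      ring
    · simp [h, h.not_gt, (Nat.lt_succ_self N).trans h]
      ring

theorem wpD_ite_le {B : ℕ → ℝ} {M : ℕ} (hB : support B ⊆ Finset.Iic M) (N : ℕ) :
    wpD (fun k => if k ≤ N then 1 else 0) B =
      ∑ i ∈ Finset.Iic M, ((N : ℝ) - 2 * i) * B i +
        ∑ i ∈ Finset.Icc (N + 1) M, (2 * (i : ℝ) - 2 * N - 1) * B i := by
  have hIcc : Finset.Icc (N + 1) M = {i ∈ Finset.Iic M | N < i} := by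
    ext
    simp only [Finset.mem_Icc, mem_filter, Finset.mem_Iic]
    omega
  rw [wpD_eq_sum_mul_sum (support_ite_le_subset N) hB, hIcc, sum_filter, ← sum_add_distrib]
  refine sum_congr rfl fun i _ => ?_
  rw [sum_congr rfl fun j hj => by rw [if_pos (Finset.mem_Iic.1 hj), one_mul],
    sum_Iic_ite_lt_sub_ite_gt]
  split_ifs <;> ring

theorem mcaD_eq_of_support_subset {B : ℕ → ℝ} {t : Finset ℕ} (hB : support B ⊆ t) (M : ℕ) :
    mcaD M B = (∑ i ∈ t, (i : ℝ) * B i) / (M * ∑ i ∈ t, B i) := by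
  rw [mcaD, finsum_eq_sum_of_support_subset _ ((support_mul_subset_right _ _).trans hB),
    finsum_eq_sum_of_support_subset _ hB]
  simp_rw [div_mul_eq_mul_div, ← sum_div, div_div]

theorem mcaD_le_div_iff {B : ℕ → ℝ} {t : Finset ℕ} (hB : support B ⊆ t) {M : ℕ} (hM : 0 < M)
    (hmass : 0 < ∑ i ∈ t, B i) (x : ℝ) :
    mcaD M B ≤ x / (2 * M) ↔ 0 ≤ ∑ i ∈ t, (x - 2 * i) * B i := by
  have hM' : (0 : ℝ) < M := Nat.cast_pos.2 hM
  simp_rw [mcaD_eq_of_support_subset hB, sub_mul, sum_sub_distrib, ← mul_sum, mul_assoc,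
    ← mul_sum]
  rw [div_le_div_iff₀ (by positivity) (by positivity), sub_nonneg]
  constructor <;> intro h <;> nlinarith

theorem mcaD_ite_le (M N : ℕ) :
    mcaD M (fun k => if k ≤ N then 1 else 0) = N / (2 * M) := by
  have hgauss : (∑ i ∈ Finset.Iic N, (i : ℝ)) * 2 = (N + 1) * N := by
    have h := sum_range_id_mul_two (N + 1)
    rw [Nat.add_sub_cancel, Nat.range_succ_eq_Iic] at h
    rw [← Nat.cast_sum]
    exact_mod_cast h
  rw [mcaD_eq_of_support_subset (support_ite_le_subset N),
    sum_congr rfl fun i hi => by rw [if_pos (Finset.mem_Iic.1 hi), mul_one],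
    sum_congr rfl fun i hi => if_pos (Finset.mem_Iic.1 hi), sum_const, Nat.card_Iic, nsmul_one]
  rcases M.eq_zero_or_pos with rfl | hM
  · simp
  · field_simp
    push_cast
    linarith

theorem stmt17_general (M jC : ℕ) (hM : 0 < M)
    (C : ℝ) (hC : C = (2*(jC:ℝ) + 1) / (2*M))
    (A : ℕ → ℝ) (hA : A = fun k => if k ≤ 2*jC + 1 then (1:ℝ) else 0) :
    mcaD M A = C ∧
    ∀ B : ℕ → ℝ, IsDStrategy B → (∀ j, M < j → B j = 0) → mcaD M B ≤ C →
      ((∑ k ∈ Finset.Icc (2*jC+2) M, (2*(k:ℝ) - 3 - 4*(jC:ℝ)) * B k) ≤ wpD A B ∧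
       0 ≤ ∑ k ∈ Finset.Icc (2*jC+2) M, (2*(k:ℝ) - 3 - 4*(jC:ℝ)) * B k ∧
       ((∃ k, 2*jC + 2 ≤ k ∧ 0 < B k) → 0 < wpD A B)) := by
  subst hA hC
  have hN : ((2 * jC + 1 : ℕ) : ℝ) = 2 * jC + 1 := by push_cast; ring
  refine ⟨by rw [mcaD_ite_le, hN], ?_⟩
  rintro B ⟨hBnn, -, hmass⟩ hBM hmca
  have hB : support B ⊆ Finset.Iic M := fun k hk => by
    by_contra h
    exact hk (hBM k (by simpa using h))
  have hcoef : ∀ k ∈ Finset.Icc (2 * jC + 2) M, (0 : ℝ) < 2 * k - 3 - 4 * jC := fun k hk => by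
    have : ((2 * jC + 2 : ℕ) : ℝ) ≤ k := Nat.cast_le.2 (Finset.mem_Icc.1 hk).1
    push_cast at this
    linarith
  have hterm : ∀ k ∈ Finset.Icc (2 * jC + 2) M, 0 ≤ (2 * (k : ℝ) - 3 - 4 * jC) * B k :=
    fun k hk => mul_nonneg (hcoef k hk).le (hBnn k)
  have hwp := wpD_ite_le hB (2 * jC + 1)
  have hconstraint := (mcaD_le_div_iff hB hM
    (by rwa [← finsum_eq_sum_of_support_subset _ hB]) _).1 (hN ▸ hmca)
  have hgain : ∑ i ∈ Finset.Icc (2 * jC + 1 + 1) M,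
      (2 * (i : ℝ) - 2 * ((2 * jC + 1 : ℕ) : ℝ) - 1) * B i =
      ∑ k ∈ Finset.Icc (2 * jC + 2) M, (2 * (k : ℝ) - 3 - 4 * jC) * B k :=
    sum_congr rfl fun _ _ => by rw [hN]; ring
  refine ⟨by linarith, sum_nonneg hterm, ?_⟩
  rintro ⟨k, hk, hBk⟩
  have hkM : k ≤ M := by
    by_contra h
    exact hBk.ne' (hBM k (by omega))
  have hk' : k ∈ Finset.Icc (2 * jC + 2) M := Finset.mem_Icc.2 ⟨hk, hkM⟩
  have hgain_pos := sum_pos' hterm ⟨k, hk', mul_pos (hcoef k hk') hBk⟩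
  linarith

theorem stmt17 (M jC : ℕ) (hM : 0 < M) (hlt : 2*jC + 1 < M)
    (C : ℝ) (hC : C = (2*(jC:ℝ) + 1) / (2*M))
    (A : ℕ → ℝ) (hA : A = fun k => if k ≤ 2*jC + 1 then (1:ℝ) else 0) :
    mcaD M A = C ∧
    ∀ B : ℕ → ℝ, IsDStrategy B → (∀ j, M < j → B j = 0) → mcaD M B ≤ C →
      ((∑ k ∈ Finset.Icc (2*jC+2) M, (2*(k:ℝ) - 3 - 4*(jC:ℝ)) * B k) ≤ wpD A B ∧
       0 ≤ ∑ k ∈ Finset.Icc (2*jC+2) M, (2*(k:ℝ) - 3 - 4*(jC:ℝ)) * B k ∧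
       ((∃ k, 2*jC + 2 ≤ k ∧ 0 < B k) → 0 < wpD A B)) :=
  stmt17_general M jC hM C hC A hA
end

section
/- Fix a constraint value C > 0 and let n ≥ 2. If (A₁, …, Aₙ) is an equilibrium point of the discrete game, then wp(Aₖ; A_j) = 0 for all j, k ∈ {1, …, n} and wp(Aₖ; B) ≥ 0 for every admissible discrete strategy B and every k; that is, each Aₖ is an equilibrium strategy for the two-player game. -/
open Set

/-!
The pairwise payoffs `w j k = wp(A_j; A_k)` are antisymmetric. Each player's equilibrium payoff
`Σ_{ℓ≠k} w k ℓ` is nonnegative (deviating to the opponents' total scores zero) and these payoffs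
sum to zero, so they all vanish; comparing with the deviations to `A_j` then forces `w = 0`.

For the second part, `S = Σ_{ℓ≠k} A_ℓ` and `T = Σ_ℓ A_ℓ` are optimal in the two-player game and
`A_k = T - S`. A strategy `P` is optimal as soon as `wpPure P ≤ t • excess` for some `t ≥ 0`, and
conversely an optimal strategy has such a Lagrange multiplier `t > 0` (test it against two-point
strategies of mean exactly `C`). By complementary slackness the bound is an equality on the
support of `T`. Since `wpPure P (j + 1) - wpPure P j = P j + P (j + 1)`, equality propagates
downwards through the zeros of `P`, so `T` and `S` both attain it on all of `[0, max supp T]`.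
Hence so does `A_k`, with multiplier `t_T - t_S`, and above the support of `T` the bound for `A_k`
follows from the last two equalities.
-/

open Function

lemma eq_zero_of_antisymm_of_sum_erase_le {ι : Type*} [Fintype ι] [DecidableEq ι]
    (w : ι → ι → ℝ) (hanti : ∀ j k, w j k = -w k j)
    (hnonneg : ∀ k, 0 ≤ ∑ ℓ ∈ Finset.univ.erase k, w k ℓ)
    (hdev : ∀ j k, ∑ ℓ ∈ Finset.univ.erase k, w j ℓ ≤ ∑ ℓ ∈ Finset.univ.erase k, w k ℓ)
    (j k : ι) : w j k = 0 := by
  have herase : ∀ j k, ∑ ℓ ∈ Finset.univ.erase k, w j ℓ = ∑ ℓ, w j ℓ - w j k :=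
    fun j k => Finset.sum_erase_eq_sub (Finset.mem_univ k)
  have hdiag : ∀ k, w k k = 0 := fun k => by linarith [hanti k k]
  have htot : ∑ k, ∑ ℓ, w k ℓ = 0 := by
    have : ∑ k, ∑ ℓ, w k ℓ = -∑ k, ∑ ℓ, w k ℓ := by
      conv_lhs => rw [Finset.sum_comm]
      simp only [← Finset.sum_neg_distrib]
      exact Finset.sum_congr rfl fun ℓ _ => Finset.sum_congr rfl fun k _ => hanti k ℓ
    linarith
  have hrow : ∀ k, ∑ ℓ, w k ℓ = 0 := fun k =>
    (Finset.sum_eq_zero_iff_of_nonneg fun k _ => by simpa [herase, hdiag] using hnonneg k).1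
      htot k (Finset.mem_univ k)
  have h1 := hdev j k
  have h2 := hdev k j
  simp only [herase, hrow, hdiag] at h1 h2
  linarith [hanti j k]

lemma sum_nonpos_of_sum_erase_nonpos {ι : Type*} [Fintype ι] [DecidableEq ι]
    (hcard : 2 ≤ Fintype.card ι) (u : ι → ℝ) (h : ∀ m, ∑ ℓ ∈ Finset.univ.erase m, u ℓ ≤ 0) :
    ∑ ℓ, u ℓ ≤ 0 := by
  have hsum : ∑ m, ∑ ℓ ∈ Finset.univ.erase m, u ℓ = (Fintype.card ι - 1) * ∑ ℓ, u ℓ := by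
    simp only [Finset.sum_erase_eq_sub (Finset.mem_univ _), Finset.sum_sub_distrib,
      Finset.sum_const, Finset.card_univ, nsmul_eq_mul]
    ring
  have hc : (2 : ℝ) ≤ Fintype.card ι := by exact_mod_cast hcard
  have := Finset.sum_nonpos fun m (_ : m ∈ Finset.univ) => h m
  rw [hsum] at this
  nlinarith

noncomputable def wpPure (P : ℕ → ℝ) (j : ℕ) : ℝ :=
  (∑ᶠ i ∈ Iio j, P i) - ∑ᶠ i ∈ Ioi j, P i

def cmpSign (j i : ℕ) : ℝ := if i < j then 1 else if j < i then -1 else 0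

lemma wpD_eq_finsum (B P : ℕ → ℝ) : wpD B P = ∑ᶠ j, B j * wpPure P j := rfl

lemma cmpSign_swap (i j : ℕ) : cmpSign i j = -cmpSign j i := by
  unfold cmpSign
  split_ifs <;> first | (exfalso; omega) | norm_num

lemma wpPure_eq_sum {P : ℕ → ℝ} {s : Finset ℕ} (hP : support P ⊆ s) (j : ℕ) :
    wpPure P j = ∑ i ∈ s, P i * cmpSign j i := by
  have hind : ∀ t : Set ℕ, support (t.indicator P) ⊆ s := fun t =>
    support_indicator.le.trans (inter_subset_right.trans hP)
  simp only [wpPure, finsum_mem_def]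
  rw [finsum_eq_sum_of_support_subset _ (hind _), finsum_eq_sum_of_support_subset _ (hind _),
    ← Finset.sum_sub_distrib]
  refine Finset.sum_congr rfl fun i _ => ?_
  simp only [indicator_apply, mem_Iio, mem_Ioi, cmpSign]
  split_ifs <;> first | (exfalso; omega) | ring

lemma wpD_antisymm {B P : ℕ → ℝ} (hB : HasFiniteSupport B) (hP : HasFiniteSupport P) :
    wpD B P = -wpD P B := by
  obtain ⟨s, hBs, hPs⟩ : ∃ s : Finset ℕ, support B ⊆ s ∧ support P ⊆ s :=
    ⟨(hB.union hP).toFinset, by simp⟩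
  rw [wpD_eq_finsum, wpD_eq_finsum,
    finsum_eq_sum_of_support_subset _ ((support_mul_subset_left _ _).trans hBs),
    finsum_eq_sum_of_support_subset _ ((support_mul_subset_left _ _).trans hPs)]
  simp only [wpPure_eq_sum hBs, wpPure_eq_sum hPs, Finset.mul_sum]
  rw [Finset.sum_comm, ← Finset.sum_neg_distrib]
  refine Finset.sum_congr rfl fun j _ => ?_
  rw [← Finset.sum_neg_distrib]
  refine Finset.sum_congr rfl fun i _ => ?_
  rw [cmpSign_swap]
  ring

lemma wpD_self {P : ℕ → ℝ} (hP : HasFiniteSupport P) : wpD P P = 0 := by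
  linarith [wpD_antisymm hP hP]

lemma wpD_add_left {A S : ℕ → ℝ} (hA : HasFiniteSupport A) (hS : HasFiniteSupport S)
    (P : ℕ → ℝ) : wpD (A + S) P = wpD A P + wpD S P := by
  simp only [wpD_eq_finsum, Pi.add_apply, add_mul]
  exact finsum_add_distrib (hA.mul_left _) (hS.mul_left _)

lemma wpPure_add {P Q : ℕ → ℝ} (hP : HasFiniteSupport P) (hQ : HasFiniteSupport Q) (j : ℕ) :
    wpPure (P + Q) j = wpPure P j + wpPure Q j := by
  simp only [wpPure, Pi.add_apply, finsum_mem_add_distrib' (hP.inter_of_right _)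
    (hQ.inter_of_right _)]
  ring

lemma wpPure_finset_sum {ι : Type*} (t : Finset ι) {G : ι → ℕ → ℝ}
    (hG : ∀ ℓ, HasFiniteSupport (G ℓ)) (j : ℕ) :
    wpPure (fun i => ∑ ℓ ∈ t, G ℓ i) j = ∑ ℓ ∈ t, wpPure (G ℓ) j := by
  induction t using Finset.cons_induction with
  | empty => simp [wpPure]
  | cons a t ha ih =>
    have hcons : (fun i => ∑ ℓ ∈ t.cons a ha, G ℓ i) = G a + fun i => ∑ ℓ ∈ t, G ℓ i := by
      ext; simp [Finset.sum_cons]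
    rw [hcons, wpPure_add (hG a) (HasFiniteSupport.sum hG t), ih, Finset.sum_cons]

lemma wpD_finset_sum_right {B : ℕ → ℝ} (hB : HasFiniteSupport B) {ι : Type*} (t : Finset ι)
    {G : ι → ℕ → ℝ} (hG : ∀ ℓ, HasFiniteSupport (G ℓ)) :
    wpD B (fun i => ∑ ℓ ∈ t, G ℓ i) = ∑ ℓ ∈ t, wpD B (G ℓ) := by
  simp only [wpD_eq_finsum, wpPure_finset_sum t hG, Finset.mul_sum]
  exact finsum_sum_comm _ _ fun ℓ _ => hB.mul_left _

lemma wpPure_succ {P : ℕ → ℝ} (hP : HasFiniteSupport P) (j : ℕ) :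
    wpPure P (j + 1) = wpPure P j + P j + P (j + 1) := by
  have hlt : Iio (j + 1) = insert j (Iio j) := by ext; simp only [mem_Iio, mem_insert_iff]; omega
  have hgt : Ioi j = insert (j + 1) (Ioi (j + 1)) := by
    ext; simp only [mem_Ioi, mem_insert_iff]; omega
  rw [wpPure, wpPure, hlt, hgt, finsum_mem_insert' _ (by simp) (hP.inter_of_right _),
    finsum_mem_insert' _ (by simp) (hP.inter_of_right _)]
  ring

lemma wpPure_eq_finsum_of_support_subset {P : ℕ → ℝ} (hP : HasFiniteSupport P) {j : ℕ}
    (h : support P ⊆ Iio j) : wpPure P j = ∑ᶠ i, P i := by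
  rw [wpPure_eq_sum hP.coe_toFinset.ge, finsum_eq_sum_of_support_subset _ hP.coe_toFinset.ge]
  refine Finset.sum_congr rfl fun i hi => ?_
  have : i < j := h (hP.mem_toFinset.1 hi)
  simp [cmpSign, this]

lemma wpPure_nonneg_of_support_subset {P : ℕ → ℝ} (hP0 : ∀ i, 0 ≤ P i)
    (hP : HasFiniteSupport P) {j : ℕ} (h : support P ⊆ Iic j) : 0 ≤ wpPure P j := by
  rw [wpPure_eq_sum hP.coe_toFinset.ge]
  refine Finset.sum_nonneg fun i hi => mul_nonneg (hP0 i) ?_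
  have : i ≤ j := h (hP.mem_toFinset.1 hi)
  unfold cmpSign
  split_ifs <;> first | (exfalso; omega) | norm_num

noncomputable def excess (M : ℕ) (C : ℝ) (j : ℕ) : ℝ := j / M - C

lemma excess_succ (M : ℕ) (C : ℝ) (j : ℕ) : excess M C (j + 1) = excess M C j + 1 / M := by
  simp only [excess]
  push_cast
  ring

lemma excess_mono (M : ℕ) (C : ℝ) : Monotone (excess M C) := fun i j hij => by
  simp only [excess]
  gcongr

section Optimality

variable {M : ℕ} {C : ℝ}

lemma mcaD_le_iff {B : ℕ → ℝ} (hB : IsDStrategy B) :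
    mcaD M B ≤ C ↔ ∑ᶠ j, B j * excess M C j ≤ 0 := by
  have hsum : ∑ᶠ j, B j * excess M C j = ∑ᶠ j : ℕ, ((j : ℝ) / M) * B j - C * ∑ᶠ j, B j := by
    rw [mul_finsum, ← finsum_sub_distrib (hB.2.1.subset (support_mul_subset_right _ _))
      (hB.2.1.subset (support_mul_subset_right _ _))]
    exact finsum_congr fun j => by simp only [excess]; ring
  rw [mcaD, div_le_iff₀ hB.2.2, hsum, sub_nonpos]

lemma IsDStrategy.finset_sum {ι : Type*} {t : Finset ι} (ht : t.Nonempty) {G : ι → ℕ → ℝ}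
    (hG : ∀ ℓ, IsDStrategy (G ℓ)) : IsDStrategy (fun j => ∑ ℓ ∈ t, G ℓ j) := by
  refine ⟨fun j => Finset.sum_nonneg fun ℓ _ => (hG ℓ).1 j,
    HasFiniteSupport.sum (fun ℓ => (hG ℓ).2.1) t, ?_⟩
  rw [finsum_sum_comm _ _ fun ℓ _ => (hG ℓ).2.1]
  exact Finset.sum_pos (fun ℓ _ => (hG ℓ).2.2) ht

lemma IsDStrategy.exists_max_support {P : ℕ → ℝ} (hP : IsDStrategy P) :
    ∃ b, P b ≠ 0 ∧ ∀ i, b < i → P i = 0 := by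
  have hne : hP.2.1.toFinset.Nonempty := by
    by_contra h
    rw [Finset.not_nonempty_iff_eq_empty, Finite.toFinset_eq_empty, support_eq_empty_iff] at h
    simpa [h] using hP.2.2
  obtain ⟨b, hb, hmax⟩ := hP.2.1.toFinset.exists_max_image id hne
  refine ⟨b, hP.2.1.mem_toFinset.1 hb, fun i hi => ?_⟩
  by_contra h
  exact absurd (hmax i (hP.2.1.mem_toFinset.2 h)) (not_le.2 hi)

lemma mcaD_finset_sum_le {ι : Type*} {t : Finset ι} (ht : t.Nonempty)
    {G : ι → ℕ → ℝ} (hG : ∀ ℓ, IsDStrategy (G ℓ)) (hadm : ∀ ℓ, mcaD M (G ℓ) ≤ C) :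
    mcaD M (fun j => ∑ ℓ ∈ t, G ℓ j) ≤ C := by
  rw [mcaD_le_iff (IsDStrategy.finset_sum ht hG)]
  simp only [Finset.sum_mul]
  rw [finsum_sum_comm _ _ fun ℓ _ => (hG ℓ).2.1.subset (support_mul_subset_left _ _)]
  exact Finset.sum_nonpos fun ℓ _ => (mcaD_le_iff (hG ℓ)).1 (hadm ℓ)

def twoPoint (j l : ℕ) (a b : ℝ) (i : ℕ) : ℝ := (if i = j then a else 0) + (if i = l then b else 0)

lemma finsum_twoPoint_mul (j l : ℕ) (a b : ℝ) (g : ℕ → ℝ) :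
    ∑ᶠ i, twoPoint j l a b i * g i = a * g j + b * g l := by
  simp only [twoPoint, add_mul, ite_mul, zero_mul]
  rw [finsum_add_distrib ((finite_singleton j).subset fun i => by simp_all)
      ((finite_singleton l).subset fun i => by simp_all),
    finsum_eq_single _ j fun i hi => by simp [hi], finsum_eq_single _ l fun i hi => by simp [hi]]
  simp

lemma isDStrategy_twoPoint {j l : ℕ} {a b : ℝ} (ha : 0 ≤ a) (hb : 0 ≤ b) (hab : 0 < a + b) :
    IsDStrategy (twoPoint j l a b) := by
  refine ⟨fun i => add_nonneg (by split_ifs <;> simp [ha]) (by split_ifs <;> simp [hb]),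
    (toFinite {j, l}).subset fun i hi => ?_, ?_⟩
  · by_contra h
    simp_all [twoPoint]
  · have htot := finsum_twoPoint_mul j l a b 1
    simp only [Pi.one_apply, mul_one] at htot
    rwa [htot]

def IsDOptimal (M : ℕ) (C : ℝ) (P : ℕ → ℝ) : Prop :=
  ∀ B, IsDStrategy B → mcaD M B ≤ C → wpD B P ≤ 0

lemma IsDOptimal.mul_wpPure_le {P : ℕ → ℝ} (hopt : IsDOptimal M C P) {j l : ℕ}
    (hj : excess M C j ≤ 0) (hl : 0 < excess M C l) :
    excess M C l * wpPure P j ≤ excess M C j * wpPure P l := by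
  have hB := isDStrategy_twoPoint (j := j) (l := l) hl.le (neg_nonneg.2 hj) (by linarith)
  have hadm : mcaD M (twoPoint j l (excess M C l) (-excess M C j)) ≤ C := by
    rw [mcaD_le_iff hB, finsum_twoPoint_mul]
    exact le_of_eq (by ring)
  have := hopt _ hB hadm
  rw [wpD_eq_finsum, finsum_twoPoint_mul] at this
  linarith

lemma exists_support_subset_Iio_excess_pos (hM : 0 < M) {P : ℕ → ℝ} (hP : HasFiniteSupport P) :
    ∃ N, support P ⊆ Iio N ∧ 0 < excess M C N := by
  obtain ⟨m, hm⟩ := hP.bddAbove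
  obtain ⟨k, hk⟩ := exists_nat_gt (C * M)
  refine ⟨m + 1 + k, fun i hi => Nat.lt_of_le_of_lt (hm hi) (by omega), ?_⟩
  have hM' : (0 : ℝ) < M := by exact_mod_cast hM
  rw [excess, sub_pos, lt_div_iff₀ hM']
  push_cast
  linarith [Nat.cast_nonneg (α := ℝ) m]

lemma IsDOptimal.exists_wpPure_le (hM : 0 < M) {P : ℕ → ℝ} (hP : IsDStrategy P)
    (hopt : IsDOptimal M C P) : ∃ t, 0 < t ∧ ∀ j, wpPure P j ≤ t * excess M C j := by
  obtain ⟨N, hN, hxN⟩ := exists_support_subset_Iio_excess_pos (C := C) hM hP.2.1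
  have htop : ∀ j, N ≤ j → wpPure P j = ∑ᶠ i, P i := fun j hj =>
    wpPure_eq_finsum_of_support_subset hP.2.1 (hN.trans (Iio_subset_Iio hj))
  set F := (Finset.range (N + 1)).filter (fun j => 0 < excess M C j)
  have hNF : N ∈ F := by simp [F, hxN]
  obtain ⟨l, hlF, hlmax⟩ := F.exists_max_image (fun j => wpPure P j / excess M C j) ⟨N, hNF⟩
  have hxl : 0 < excess M C l := (Finset.mem_filter.1 hlF).2
  set t := wpPure P l / excess M C l
  have hF : ∀ j ∈ F, wpPure P j ≤ t * excess M C j := fun j hj =>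
    (div_le_iff₀ (Finset.mem_filter.1 hj).2).1 (hlmax j hj)
  have ht : 0 < t := (div_pos (by rw [htop N le_rfl]; exact hP.2.2) hxN).trans_le (hlmax N hNF)
  refine ⟨t, ht, fun j => ?_⟩
  rcases le_or_gt (excess M C j) 0 with hj | hj
  · have hpair := hopt.mul_wpPure_le hj hxl
    rw [show wpPure P l = t * excess M C l from (div_mul_cancel₀ _ hxl.ne').symm] at hpair
    exact le_of_mul_le_mul_left (by linarith) hxl
  · rcases le_or_gt j N with hjN | hjN
    · exact hF j (by simp [F, hj, Nat.lt_succ_of_le hjN])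
    · rw [htop j hjN.le, ← htop N le_rfl]
      exact (hF N hNF).trans (mul_le_mul_of_nonneg_left (excess_mono M C hjN.le) ht.le)

lemma isDOptimal_of_wpPure_le {P : ℕ → ℝ} {t : ℝ} (ht : 0 ≤ t)
    (h : ∀ j, wpPure P j ≤ t * excess M C j) : IsDOptimal M C P := by
  intro B hB hBadm
  calc wpD B P = ∑ᶠ j, B j * wpPure P j := rfl
    _ ≤ ∑ᶠ j, B j * (t * excess M C j) :=
      finsum_le_finsum' (hB.2.1.subset (support_mul_subset_left _ _))
        (hB.2.1.subset (support_mul_subset_left _ _))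
        fun j => mul_le_mul_of_nonneg_left (h j) (hB.1 j)
    _ = t * ∑ᶠ j, B j * excess M C j := by
      rw [mul_finsum]
      exact finsum_congr fun j => by ring
    _ ≤ 0 := mul_nonpos_of_nonneg_of_nonpos ht ((mcaD_le_iff hB).1 hBadm)

lemma wpPure_eq_of_wpD_eq_zero {P Q : ℕ → ℝ} {t : ℝ} (ht : 0 ≤ t)
    (hle : ∀ j, wpPure P j ≤ t * excess M C j) (hQ : IsDStrategy Q) (hQadm : mcaD M Q ≤ C)
    (h0 : wpD Q P = 0) {i : ℕ} (hi : Q i ≠ 0) : wpPure P i = t * excess M C i := by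
  set g := fun j => Q j * (t * excess M C j - wpPure P j)
  have hg : HasFiniteSupport g := hQ.2.1.subset (support_mul_subset_left _ _)
  have hg0 : ∀ j, 0 ≤ g j := fun j => mul_nonneg (hQ.1 j) (sub_nonneg.2 (hle j))
  have hsum : ∑ᶠ j, g j = t * ∑ᶠ j, Q j * excess M C j - wpD Q P := by
    rw [wpD_eq_finsum, mul_finsum, ← finsum_sub_distrib
      (hQ.2.1.subset fun j hj => left_ne_zero_of_mul (right_ne_zero_of_mul hj))
      (hQ.2.1.subset (support_mul_subset_left _ _))]
    exact finsum_congr fun j => by ring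
  have hgi : g i ≤ 0 := (single_le_finsum i hg hg0).trans <| by
    rw [hsum, h0, sub_zero]
    exact mul_nonpos_of_nonneg_of_nonpos ht ((mcaD_le_iff hQ).1 hQadm)
  have := (mul_eq_zero.1 (le_antisymm hgi (hg0 i))).resolve_left hi
  linarith

lemma wpPure_eq_of_succ {P : ℕ → ℝ} {t : ℝ} (hP0 : ∀ i, 0 ≤ P i) (hP : HasFiniteSupport P)
    (hle : ∀ j, wpPure P j ≤ t * excess M C j) {j : ℕ} (hj : P j = 0)
    (h : wpPure P (j + 1) = t * excess M C (j + 1)) : wpPure P j = t * excess M C j := by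
  have h1 := wpPure_succ hP j
  have h2 := wpPure_succ hP (j + 1)
  have h3 := hle (j + 2)
  rw [excess_succ, mul_add, mul_one_div] at h h3
  rw [excess_succ, mul_add, mul_one_div] at h3
  refine le_antisymm (hle j) ?_
  linarith [hP0 (j + 2)]

lemma wpPure_eq_of_le_of_mem {P : ℕ → ℝ} {t : ℝ} (hP0 : ∀ i, 0 ≤ P i)
    (hP : HasFiniteSupport P) (hle : ∀ j, wpPure P j ≤ t * excess M C j) {D : Set ℕ}
    (hD : ∀ i ∉ D, P i = 0) (hcontact : ∀ i ∈ D, wpPure P i = t * excess M C i) {b : ℕ}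
    (hb : b ∈ D) : ∀ j ≤ b, wpPure P j = t * excess M C j := by
  intro j hj
  induction hj using Nat.decreasingInduction with
  | self => exact hcontact b hb
  | of_succ k _ ih =>
    by_cases hk : k ∈ D
    · exact hcontact k hk
    · exact wpPure_eq_of_succ hP0 hP hle (hD k hk) ih

lemma nonneg_and_wpPure_le_of_forall_le_eq (hM : 0 < M) {P : ℕ → ℝ} {t : ℝ} (hP0 : ∀ i, 0 ≤ P i)
    (hP : HasFiniteSupport P) {b : ℕ} (hb : 1 ≤ b) (htop : ∀ i, b < i → P i = 0)
    (hc : ∀ j ≤ b, wpPure P j = t * excess M C j) :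
    0 ≤ t ∧ ∀ j, wpPure P j ≤ t * excess M C j := by
  obtain ⟨c, rfl⟩ : ∃ c, b = c + 1 := ⟨b - 1, by omega⟩
  have hstep : P c + P (c + 1) = t / M := by
    have := wpPure_succ hP c
    rw [hc c (by omega), hc (c + 1) le_rfl, excess_succ, mul_add, mul_one_div] at this
    linarith
  have ht : 0 ≤ t := by
    have := hstep ▸ add_nonneg (hP0 c) (hP0 (c + 1))
    simpa using (le_div_iff₀ (by exact_mod_cast hM : (0 : ℝ) < M)).1 this
  refine ⟨ht, fun j => ?_⟩
  rcases le_or_gt j (c + 1) with hj | hj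
  · exact (hc j hj).le
  obtain hj : c + 2 ≤ j := hj
  induction j, hj using Nat.le_induction with
  | base =>
    have := wpPure_succ hP (c + 1)
    rw [htop (c + 2) (by omega), hc (c + 1) le_rfl] at this
    rw [this, excess_succ M C (c + 1), mul_add, mul_one_div]
    linarith [hP0 c]
  | succ k hk ih =>
    have := wpPure_succ hP k
    rw [htop k (by omega), htop (k + 1) (by omega)] at this
    rw [this, add_zero, add_zero]
    exact ih.trans (mul_le_mul_of_nonneg_left (excess_mono M C (by omega)) ht)

lemma one_le_of_excess_nonneg (hC : 0 < C) {b : ℕ} (hb : 0 ≤ excess M C b) : 1 ≤ b := by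
  rcases Nat.eq_zero_or_pos b with rfl | h
  · simp [excess] at hb
    linarith
  · exact h

theorem IsDOptimal.of_add (hM : 0 < M) (hC : 0 < C) {A S : ℕ → ℝ} (hA : IsDStrategy A)
    (hS : IsDStrategy S) (hAS : IsDStrategy (A + S)) (hadm : mcaD M (A + S) ≤ C)
    (hSopt : IsDOptimal M C S) (hASopt : IsDOptimal M C (A + S)) (h0 : wpD A S = 0) :
    IsDOptimal M C A := by
  obtain ⟨tT, htT, hTle⟩ := hASopt.exists_wpPure_le hM hAS
  obtain ⟨tS, htS, hSle⟩ := hSopt.exists_wpPure_le hM hS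
  have hTS : wpD (A + S) S = 0 := by rw [wpD_add_left hA.2.1 hS.2.1, h0, wpD_self hS.2.1, add_zero]
  obtain ⟨b, hb, hbtop⟩ := hAS.exists_max_support
  have hTc := wpPure_eq_of_le_of_mem hAS.1 hAS.2.1 hTle (fun i hi => notMem_support.1 hi)
    (fun i hi => wpPure_eq_of_wpD_eq_zero htT.le hTle hAS hadm (wpD_self hAS.2.1) hi) hb
  have hA0 : ∀ i, (A + S) i = 0 → A i = 0 := fun i hi => by
    simp only [Pi.add_apply] at hi
    linarith [hA.1 i, hS.1 i]
  have hS0 : ∀ i, (A + S) i = 0 → S i = 0 := fun i hi => by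
    simp only [Pi.add_apply] at hi
    linarith [hA.1 i, hS.1 i]
  have hSc := wpPure_eq_of_le_of_mem hS.1 hS.2.1 hSle (D := support (A + S))
    (fun i hi => hS0 i (notMem_support.1 hi))
    (fun i hi => wpPure_eq_of_wpD_eq_zero htS.le hSle hAS hadm hTS hi) hb
  have hAc : ∀ j ≤ b, wpPure A j = (tT - tS) * excess M C j := fun j hj => by
    have := wpPure_add hA.2.1 hS.2.1 j
    rw [hTc j hj, hSc j hj] at this
    rw [sub_mul]
    linarith
  have hb1 : 1 ≤ b := by
    refine one_le_of_excess_nonneg (M := M) hC (nonneg_of_mul_nonneg_right ?_ htT)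
    rw [← hTc b le_rfl]
    exact wpPure_nonneg_of_support_subset hAS.1 hAS.2.1 fun i hi => not_lt.1 fun h => hi (hbtop i h)
  obtain ⟨ht, hle⟩ := nonneg_and_wpPure_le_of_forall_le_eq hM hA.1 hA.2.1 hb1
    (fun i hi => hA0 i (hbtop i hi)) hAc
  exact isDOptimal_of_wpPure_le ht hle

lemma IsDOptimal.finset_sum_of_sum_erase {ι : Type*} [Fintype ι] [DecidableEq ι]
    (hcard : 2 ≤ Fintype.card ι) {G : ι → ℕ → ℝ} (hG : ∀ ℓ, HasFiniteSupport (G ℓ))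
    (h : ∀ m, IsDOptimal M C (fun j => ∑ ℓ ∈ Finset.univ.erase m, G ℓ j)) :
    IsDOptimal M C (fun j => ∑ ℓ, G ℓ j) := by
  intro B hB hBadm
  rw [wpD_finset_sum_right hB.2.1 _ hG]
  exact sum_nonpos_of_sum_erase_nonpos hcard _ fun m =>
    (wpD_finset_sum_right hB.2.1 _ hG).symm.trans_le (h m B hB hBadm)

end Optimality

def IsDEquilibrium {ι : Type*} [Fintype ι] [DecidableEq ι] (M : ℕ) (C : ℝ)
    (A : ι → ℕ → ℝ) : Prop :=
  (∀ k, IsDStrategy (A k)) ∧ (∀ k, mcaD M (A k) ≤ C) ∧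
    ∀ k, ∀ B, IsDStrategy B → mcaD M B ≤ C →
      wpD B (fun j => ∑ ℓ ∈ Finset.univ.erase k, A ℓ j) ≤
        wpD (A k) (fun j => ∑ ℓ ∈ Finset.univ.erase k, A ℓ j)

namespace IsDEquilibrium

variable {ι : Type*} [Fintype ι] [DecidableEq ι] {M : ℕ} {C : ℝ} {A : ι → ℕ → ℝ}

lemma isDStrategy_sum_erase (h : IsDEquilibrium M C A) (hcard : 2 ≤ Fintype.card ι) (k : ι) :
    IsDStrategy (fun j => ∑ ℓ ∈ Finset.univ.erase k, A ℓ j) :=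
  IsDStrategy.finset_sum
    (Finset.univ_nontrivial_iff.2 (Fintype.one_lt_card_iff_nontrivial.1 hcard)).erase_nonempty h.1

lemma mcaD_sum_erase_le (h : IsDEquilibrium M C A) (hcard : 2 ≤ Fintype.card ι) (k : ι) :
    mcaD M (fun j => ∑ ℓ ∈ Finset.univ.erase k, A ℓ j) ≤ C :=
  mcaD_finset_sum_le
    (Finset.univ_nontrivial_iff.2 (Fintype.one_lt_card_iff_nontrivial.1 hcard)).erase_nonempty
    h.1 h.2.1

lemma wpD_eq_zero (h : IsDEquilibrium M C A) (hcard : 2 ≤ Fintype.card ι) (j k : ι) :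
    wpD (A j) (A k) = 0 := by
  have hfin : ∀ ℓ, HasFiniteSupport (A ℓ) := fun ℓ => (h.1 ℓ).2.1
  refine eq_zero_of_antisymm_of_sum_erase_le _ (fun j k => wpD_antisymm (hfin j) (hfin k))
    (fun k => ?_) (fun j k => ?_) j k
  · rw [← wpD_finset_sum_right (hfin k) _ hfin]
    linarith [h.2.2 k _ (h.isDStrategy_sum_erase hcard k) (h.mcaD_sum_erase_le hcard k),
      wpD_self (h.isDStrategy_sum_erase hcard k).2.1]
  · rw [← wpD_finset_sum_right (hfin j) _ hfin, ← wpD_finset_sum_right (hfin k) _ hfin]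
    exact h.2.2 k (A j) (h.1 j) (h.2.1 j)

lemma wpD_sum_erase_eq_zero (h : IsDEquilibrium M C A) (hcard : 2 ≤ Fintype.card ι) (k : ι) :
    wpD (A k) (fun j => ∑ ℓ ∈ Finset.univ.erase k, A ℓ j) = 0 := by
  rw [wpD_finset_sum_right (h.1 k).2.1 _ fun ℓ => (h.1 ℓ).2.1]
  exact Finset.sum_eq_zero fun ℓ _ => h.wpD_eq_zero hcard k ℓ

lemma isDOptimal_sum_erase (h : IsDEquilibrium M C A) (hcard : 2 ≤ Fintype.card ι) (k : ι) :
    IsDOptimal M C (fun j => ∑ ℓ ∈ Finset.univ.erase k, A ℓ j) := fun B hB hBadm =>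
  (h.2.2 k B hB hBadm).trans_eq (h.wpD_sum_erase_eq_zero hcard k)

lemma isDOptimal (hM : 0 < M) (hC : 0 < C) (h : IsDEquilibrium M C A)
    (hcard : 2 ≤ Fintype.card ι) (k : ι) : IsDOptimal M C (A k) := by
  have hT : A k + (fun j => ∑ ℓ ∈ Finset.univ.erase k, A ℓ j) = fun j => ∑ ℓ, A ℓ j :=
    funext fun j => Finset.add_sum_erase _ (fun ℓ => A ℓ j) (Finset.mem_univ k)
  have huniv : (Finset.univ : Finset ι).Nonempty := ⟨k, Finset.mem_univ k⟩
  refine IsDOptimal.of_add hM hC (h.1 k) (h.isDStrategy_sum_erase hcard k) ?_ ?_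
    (h.isDOptimal_sum_erase hcard k) ?_ (h.wpD_sum_erase_eq_zero hcard k)
  · rw [hT]
    exact IsDStrategy.finset_sum huniv h.1
  · rw [hT]
    exact mcaD_finset_sum_le huniv h.1 h.2.1
  · rw [hT]
    exact IsDOptimal.finset_sum_of_sum_erase hcard (fun ℓ => (h.1 ℓ).2.1)
      (h.isDOptimal_sum_erase hcard)

end IsDEquilibrium

theorem stmt18 (M : ℕ) (hM : 0 < M) (C : ℝ) (hC : 0 < C) (n : ℕ) (hn : 2 ≤ n)
    (A : Fin n → ℕ → ℝ)
    (hstrat : ∀ k, IsDStrategy (A k)) (hadm : ∀ k, mcaD M (A k) ≤ C)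
    (heq : ∀ k, ∀ B : ℕ → ℝ, IsDStrategy B → mcaD M B ≤ C →
      wpD B (fun j => ∑ ℓ ∈ Finset.univ.erase k, A ℓ j) ≤
        wpD (A k) (fun j => ∑ ℓ ∈ Finset.univ.erase k, A ℓ j)) :
    (∀ j k, wpD (A k) (A j) = 0) ∧
    (∀ k, ∀ B : ℕ → ℝ, IsDStrategy B → mcaD M B ≤ C → 0 ≤ wpD (A k) B) := by
  have h : IsDEquilibrium M C A := ⟨hstrat, hadm, heq⟩
  have hcard : 2 ≤ Fintype.card (Fin n) := by simpa using hn
  refine ⟨fun j k => h.wpD_eq_zero hcard k j, fun k B hB hBadm => ?_⟩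
  rw [wpD_antisymm (hstrat k).2.1 hB.2.1]
  linarith [h.isDOptimal hM hC hcard k B hB hBadm]
end
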